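/- arXiv:math/0203012 — 5 statements merged into one kernel-verified Lean document; each statement's English description precedes it below -/
import Mathlib

section
/- For every chord diagram D, the colored Jones weight equals the state sum J′ of its labeled intersection digraph with all variables set to 1: W_J(D) = J′(LID(D))|_{x_e=1} in ℚ[λ]. -/
open Finset

/-! ### Permanents -/

/-- The permanent of a square matrix. -/
noncomputable def perm {ι R : Type*} [Fintype ι] [DecidableEq ι] [CommRing R]
    (M : Matrix ι ι R) : R :=
  ∑ σ : Equiv.Perm ι, ∏ i, M i (σ i)

/-! ### Chord diagrams -/

/-- A chord diagram with `n` chords: a partition of `{1,…,2n}` into `n` two-element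
subsets (chords), each recorded by its left endpoint `l i` and right endpoint `r i`,
with the chords numbered in increasing order of their left endpoints. -/
structure ChordDiagram (n : ℕ) where
  l : Fin n → Fin (2 * n)
  r : Fin n → Fin (2 * n)
  lr : ∀ i, l i < r i
  mono : StrictMono l
  cover : ∀ q : Fin (2 * n), ∃! i : Fin n, l i = q ∨ r i = q

namespace ChordDiagram

variable {n : ℕ}

/-- Chords `i` and `j` intersect. -/
abbrev Intersect (D : ChordDiagram n) (i j : Fin n) : Prop :=
  (D.l i < D.l j ∧ D.l j < D.r i ∧ D.r i < D.r j) ∨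
  (D.l j < D.l i ∧ D.l i < D.r j ∧ D.r j < D.r i)

/-- Chord `i` is completely contained in chord `j`. -/
abbrev Contained (D : ChordDiagram n) (i j : Fin n) : Prop :=
  D.l j < D.l i ∧ D.r i < D.r j

/-- The five colors `I, B⁺₀, B⁺₁, B⁻₀, B⁻₁` (`true` encodes subscript `1`). -/
inductive JCol where
  | I : JCol
  | Bp : Bool → JCol
  | Bm : Bool → JCol
  deriving DecidableEq, Fintype

/-- The contribution `δ` of a left endpoint of a chord with a given color. -/
def lsign : JCol → ℤ
  | .Bp true => 1
  | .Bm true => -1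
  | _ => 0

/-- `δ(q)` for a coloring `ρ` of the chords of `D`. -/
def delta (D : ChordDiagram n) (ρ : Fin n → JCol) (q : Fin (2 * n)) : ℤ :=
  ∑ v : Fin n, ((if D.l v = q then lsign (ρ v) else 0) +
                (if D.r v = q then - lsign (ρ v) else 0))

/-- `Σ_{q < p} δ(q)`. -/
def kOf (D : ChordDiagram n) (ρ : Fin n → JCol) (p : Fin (2 * n)) : ℤ :=
  ∑ q ∈ univ.filter (fun q => q < p), D.delta ρ q

/-- The weight `ω_ρ(v)` of chord `v` under the coloring `ρ`. -/
noncomputable def omega (D : ChordDiagram n) (ρ : Fin n → JCol) (v : Fin n) :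
    Polynomial ℚ :=
  match ρ v with
  | .I => Polynomial.X + 2
  | .Bp ε => - (-1 : Polynomial ℚ) ^ (if ε then 1 else 0) *
      (1 + ((D.kOf ρ (D.l v) : ℤ) : Polynomial ℚ)) *
      (Polynomial.X + 1 - ((D.kOf ρ (D.r v) : ℤ) : Polynomial ℚ))
  | .Bm ε => - (-1 : Polynomial ℚ) ^ (if ε then 1 else 0) *
      (1 + ((D.kOf ρ (D.r v) : ℤ) : Polynomial ℚ)) *
      (Polynomial.X + 1 - ((D.kOf ρ (D.l v) : ℤ) : Polynomial ℚ))

/-- The colored Jones weight system `W_J(D) ∈ ℚ[λ]` (with `λ = X`). -/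
noncomputable def WJ (D : ChordDiagram n) : Polynomial ℚ :=
  ∑ ρ : Fin n → JCol, ∏ v : Fin n, D.omega ρ v

/-- The intersection matrix `IM(D)` with entries `sign(i−j)` for intersecting chords. -/
def IM (D : ChordDiagram n) : Matrix (Fin n) (Fin n) ℚ := fun i j =>
  if D.Intersect i j then (if j < i then 1 else if i < j then -1 else 0) else 0

/-- The `3×3` block `A₀`. -/
noncomputable def A0 : Matrix (Fin 3) (Fin 3) (Polynomial ℚ) :=
  !![Polynomial.X + 2, 0, 0; 0, Polynomial.X + 2, 1; Polynomial.X, -Polynomial.X - 2, 1]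

/-- The `3×3` block `A₊`. -/
noncomputable def Aplus : Matrix (Fin 3) (Fin 3) (Polynomial ℚ) := !![1, 1, 0; 0, 0, 0; 0, 0, 0]

/-- The `3×3` block `A₋`. -/
noncomputable def Aminus : Matrix (Fin 3) (Fin 3) (Polynomial ℚ) := !![0, 0, 0; -1, -1, 0; 0, 0, 0]

/-- The `3×3` block `A_c`. -/
noncomputable def Acont : Matrix (Fin 3) (Fin 3) (Polynomial ℚ) := !![1, 1, 0; -1, -1, 0; 0, 0, 0]

/-- The blown-up intersection matrix `IM_J(D)`, a `3n×3n` matrix of `3×3` blocks. -/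
noncomputable def IMJ (D : ChordDiagram n) :
    Matrix (Fin n × Fin 3) (Fin n × Fin 3) (Polynomial ℚ) := fun p q =>
  (if p.1 = q.1 then A0
   else if q.1 < p.1 ∧ D.Intersect p.1 q.1 then Aplus
   else if p.1 < q.1 ∧ D.Intersect p.1 q.1 then Aminus
   else if ¬ D.Intersect p.1 q.1 ∧ D.Contained p.1 q.1 then Acont
   else 0) p.2 q.2

end ChordDiagram

/-! ### Looped digraphs -/

/-- A looped digraph: a finite digraph (arcs a set of ordered pairs) with a loop at
every vertex and a distinguished set of red non-loop arcs. -/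
structure LoopedDigraph (V : Type*) [Fintype V] [DecidableEq V] where
  arcs : Finset (V × V)
  red : Finset (V × V)
  loop_mem : ∀ v : V, (v, v) ∈ arcs
  red_sub : red ⊆ arcs
  red_no_loop : ∀ v : V, (v, v) ∉ red

/-- A thickened arc `(e, b)`, where `e` is an arc of the digraph and `b : Bool` records:
for an uncolored arc, whether it is thickened at its tail (`true`) or head (`false`);
for a red arc (always thickened at its tail `e.1`), whether it keeps its original
orientation (`true`) or is reversed (`false`). Loops always carry `b = true`. -/
abbrev TArc (V : Type*) := (V × V) × Bool

variable {V : Type*} [Fintype V] [DecidableEq V]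

/-- The degree of `v` in a collection `K` of thickened arcs: the number of arc-ends of
`K` at `v` (a loop contributing `2`). -/
def degAt (K : Finset (TArc V)) (v : V) : ℕ :=
  ∑ t ∈ K, ((if t.1.1 = v then 1 else 0) + (if t.1.2 = v then 1 else 0))

/-- `deg₄(K)`: the number of vertices of degree `4` in `K`. -/
def deg4 (K : Finset (TArc V)) : ℕ := (univ.filter fun v => degAt K v = 4).card

namespace LoopedDigraph

variable (G : LoopedDigraph V)

/-- The initial vertex of a thickened arc, as oriented in the collection. -/
def src (t : TArc V) : V := if t.1 ∈ G.red ∧ t.2 = false then t.1.2 else t.1.1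

/-- The terminal vertex of a thickened arc, as oriented in the collection. -/
def dst (t : TArc V) : V := if t.1 ∈ G.red ∧ t.2 = false then t.1.1 else t.1.2

/-- The vertex at which a thickened arc is thickened. -/
def tvert (t : TArc V) : V := if t.1 ∈ G.red then t.1.1 else if t.2 then t.1.1 else t.1.2

/-- The number of arcs of `K` thickened at `v`. -/
def thickAt (K : Finset (TArc V)) (v : V) : ℕ := (K.filter fun t => G.tvert t = v).card

/-- The number of arcs of `K` thickened at `v` that leave `v` (a loop counting as
leaving). -/
def outThickAt (K : Finset (TArc V)) (v : V) : ℕ :=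
  (K.filter fun t => G.tvert t = v ∧ G.src t = v).card

/-- An acceptable object for a looped digraph. -/
structure IsAcceptable (K : Finset (TArc V)) : Prop where
  mem_arcs : ∀ t ∈ K, t.1 ∈ G.arcs
  loop_thick : ∀ t ∈ K, t.1.1 = t.1.2 → t.2 = true
  deg024 : ∀ v, degAt K v = 0 ∨ degAt K v = 2 ∨ degAt K v = 4
  half_thick : ∀ v, 2 * G.thickAt K v = degAt K v
  balance : ∀ v, G.thickAt K v = 2 → G.outThickAt K v = 1

/-- `a(K)`: the number of arcs of `K` thickened at their initial vertex (loops count). -/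
def aK (K : Finset (TArc V)) : ℕ := (K.filter fun t => G.src t = G.tvert t).card

open Classical in
/-- The partition function `J(G)`, with `λ ↦ lam` and `x_e ↦ x e`. -/
noncomputable def J {R : Type*} [CommRing R] (lam : R) (x : V × V → R) : R :=
  ∑ K : Finset (TArc V),
    if G.IsAcceptable K then
      2 ^ deg4 K * (lam + 2) ^ (Fintype.card V - deg4 K) *
        (∏ t ∈ K, x t.1) * (-1 : R) ^ G.aK K
    else 0

/-- `s(w) = δ_w · ε_w` for a partial coloring `c` (with support the set `V′`). -/
def sInt (c : V → Option (Bool × Bool)) (w : V) : ℤ :=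
  match c w with
  | none => 0
  | some (δ, ε) => (if δ then 1 else -1) * (if ε then 1 else 0)

/-- `z_v(e)` (for `bar = false`) and `z̄_v(e)` (for `bar = true`). -/
def zfun {R : Type*} [CommRing R] (x : V × V → R) (c : V → Option (Bool × Bool))
    (bar : Bool) (v : V) (e : V × V) : R :=
  match c v with
  | none => 0
  | some (δ, _) =>
    if e ∈ G.red then
      (if e.1 = v then ((sInt c e.2 : ℤ) : R) * x e else 0)
    else if e.1 = v then (if δ = bar then ((sInt c e.2 : ℤ) : R) * x e else 0)
    else if e.2 = v then (if δ ≠ bar then ((sInt c e.1 : ℤ) : R) * x e else 0)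
    else 0

/-- The weight `ω′_c(v)`. -/
noncomputable def omegaC {R : Type*} [CommRing R] (lam : R) (x : V × V → R)
    (c : V → Option (Bool × Bool)) (v : V) : R :=
  match c v with
  | none => 0
  | some (_, ε) =>
    - (-1 : R) ^ (if ε then 1 else 0) *
      (1 + ∑ e ∈ G.arcs, G.zfun x c false v e) *
      (lam + 1 - ∑ e ∈ G.arcs, G.zfun x c true v e)

/-- The state sum `J′(G)`: the sum over `V′ ⊆ V` and colorings `c` of `V′` is encoded
as a sum over partial colorings `c : V → Option (Bool × Bool)` with support `V′`. -/
noncomputable def J' {R : Type*} [CommRing R] (lam : R) (x : V × V → R) : R :=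
  ∑ c : V → Option (Bool × Bool),
    (lam + 2) ^ (univ.filter fun v => c v = none).card *
      ∏ v ∈ univ.filter (fun v => (c v).isSome = true), G.omegaC lam x c v

end LoopedDigraph

/-! ### The labeled intersection digraph of a chord diagram -/

open ChordDiagram in
/-- The labeled intersection digraph `LID(D)` of a chord diagram `D`. -/
def LID {n : ℕ} (D : ChordDiagram n) : LoopedDigraph (Fin n) where
  arcs := univ.filter fun p : Fin n × Fin n =>
    p.1 = p.2 ∨ (p.1 < p.2 ∧ D.Intersect p.1 p.2) ∨ D.Contained p.1 p.2
  red := univ.filter fun p : Fin n × Fin n => D.Contained p.1 p.2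
  loop_mem := by intro v; simp
  red_sub := by intro p hp; simp only [mem_filter, mem_univ, true_and] at hp ⊢; tauto
  red_no_loop := by
    intro v hv
    simp only [mem_filter, mem_univ, true_and] at hv
    exact lt_irrefl _ hv.1

/-! ### The data `(V′, h)` and the state sum `A(V′, h)` -/

/-- The data of a function `h` assigning to every `v ∈ V′` a set of at most two arcs of
`G` incident with `v`, every red arc of `h v` leaving `v` (and `h v = ∅` off `V′`). -/
structure HData (G : LoopedDigraph V) (V' : Finset V) where
  h : V → Finset (V × V)
  sub : ∀ v, h v ⊆ G.arcs
  card_le : ∀ v, (h v).card ≤ 2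
  incident : ∀ v, ∀ e ∈ h v, e.1 = v ∨ e.2 = v
  red_out : ∀ v, ∀ e ∈ h v, e ∈ G.red → e.1 = v
  outside : ∀ v, v ∉ V' → h v = ∅

/-- The number of arc-ends at `v` among a set of thickened arcs `(e, w)`. -/
def endCountAt (S : Finset ((V × V) × V)) (v : V) : ℕ :=
  ∑ p ∈ S, ((if p.1.1 = v then 1 else 0) + (if p.1.2 = v then 1 else 0))

namespace HData

variable {G : LoopedDigraph V} {V' : Finset V} (H : HData G V')

/-- `W₁ = {v ∈ V′ : |h(v)| = 2}`. -/
def W1 : Finset V := V'.filter fun v => (H.h v).card = 2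

/-- `W₂ = {v ∈ V′ : |h(v)| ≥ 1}`. -/
def W2 : Finset V := V'.filter fun v => 1 ≤ (H.h v).card

/-- `h(W₂)`: the set of thickened arcs `(e, v)` with `v ∈ W₂` and `e ∈ h v`. -/
def hW2 : Finset ((V × V) × V) :=
  univ.filter fun p => p.2 ∈ H.W2 ∧ p.1 ∈ H.h p.2

/-- The functions `g` on `S` with `g v ∈ h v`, encoded as singleton-valued selections
`gs : V → Finset (V × V)` (with `gs v = ∅` off `S`). -/
def choices (S : Finset V) : Finset (V → Finset (V × V)) :=
  univ.filter fun gs => ∀ v, gs v ⊆ H.h v ∧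
    (v ∈ S → (gs v).card = 1) ∧ (v ∉ S → gs v = ∅)

/-- The summand `B(c, V₂′, g)`; here `g` is encoded by the selection `gs` on
`W₁ ∪ V₂′` and the complementary function `f` (on `W₁ ∪ V₁′`, `V₁′ = W₂∖(W₁∪V₂′)`)
is encoded by the complementary selection `h v ∖ gs v`. -/
noncomputable def Bterm {R : Type*} [CommRing R] (lam : R) (x : V × V → R)
    (c : V → Option (Bool × Bool)) (V2 : Finset V) (gs : V → Finset (V × V)) : R :=
  (-1 : R) ^ (∑ v ∈ V', ((c v).elim 0 fun p => if p.2 then 1 else 0 : ℕ)) *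
  (-1 : R) ^ (H.W1 ∪ V2).card *
  (lam + 1) ^ (V' \ (H.W1 ∪ V2)).card *
  (∏ v ∈ H.W1 ∪ V2, ∏ e ∈ gs v, G.zfun x c true v e) *
  (∏ v ∈ H.W1 ∪ (H.W2 \ (H.W1 ∪ V2)), ∏ e ∈ H.h v \ gs v, G.zfun x c false v e)

open Classical in
/-- The state sum `A(V′, h)`. -/
noncomputable def Aval {R : Type*} [CommRing R] (lam : R) (x : V × V → R) : R :=
  ∑ c : V → Option (Bool × Bool),
    if (∀ v, (c v).isSome = true ↔ v ∈ V') then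
      ∑ V2 ∈ (H.W2 \ H.W1).powerset, ∑ gs ∈ H.choices (H.W1 ∪ V2),
        H.Bterm lam x c V2 gs
    else 0

end HData

/-! ### Good collections and the state sum `C(X, V′, K)` -/

namespace LoopedDigraph

/-- A collection of thickened arcs good on `V′`. -/
structure IsGood (G : LoopedDigraph V) (V' : Finset V) (K : Finset (TArc V)) : Prop where
  mem_arcs : ∀ t ∈ K, t.1 ∈ G.arcs
  loop_thick : ∀ t ∈ K, t.1.1 = t.1.2 → t.2 = true
  red_orig : ∀ t ∈ K, t.1 ∈ G.red → t.2 = true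
  deg_mem : ∀ v ∈ V', degAt K v = 2 ∨ degAt K v = 4
  deg_out : ∀ v, v ∉ V' → degAt K v = 0
  half_thick : ∀ v, 2 * G.thickAt K v = degAt K v
  unc_opp : ∀ t ∈ K, ∀ s ∈ K, t ≠ s → t.1 ∉ G.red → s.1 ∉ G.red →
    G.tvert t = G.tvert s → ((G.src t = G.tvert t) ↔ ¬ (G.src s = G.tvert s))

/-- The set `W₁` of degree-4 vertices of a collection `K`. -/
def KW1 (G : LoopedDigraph V) (K : Finset (TArc V)) : Finset V :=
  univ.filter fun v => degAt K v = 4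

/-- The arcs of `K` thickened at `v`. -/
def thickedAt (G : LoopedDigraph V) (K : Finset (TArc V)) (v : V) : Finset (TArc V) :=
  K.filter fun t => G.tvert t = v

/-- The functions `g′` assigning to each degree-4 vertex one of the two arcs of `K`
thickened at it, encoded as singleton-valued selections. -/
def kchoices (G : LoopedDigraph V) (K : Finset (TArc V)) : Finset (V → Finset (TArc V)) :=
  univ.filter fun cs => ∀ v, cs v ⊆ G.thickedAt K v ∧
    (v ∈ KW1 G K → (cs v).card = 1) ∧ (v ∉ KW1 G K → cs v = ∅)

open Classical in
/-- The state sum `C(X, V′, K)`. -/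
noncomputable def Cval {R : Type*} [CommRing R] (G : LoopedDigraph V) (V' : Finset V)
    (K : Finset (TArc V)) (X : Finset V) (x : V × V → R) : R :=
  ∑ cs ∈ kchoices G K,
    (-1 : R) ^ (KW1 G K).card * (-1 : R) ^ X.card *
    ∑ c : V → Option (Bool × Bool),
      if (∀ v, (c v).isSome = true ↔ v ∈ V') then
        (∏ v ∈ KW1 G K ∪ X,
          ∏ t ∈ (if v ∈ KW1 G K then cs v else G.thickedAt K v), G.zfun x c true v t.1) *
        (∏ v ∈ V' \ X, ∏ t ∈ G.thickedAt K v \ cs v, G.zfun x c false v t.1)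
      else 0

/-- A connected acceptable object: one with no single loops. -/
def IsConnectedObj (G : LoopedDigraph V) (K : Finset (TArc V)) : Prop :=
  G.IsAcceptable K ∧ ∀ t ∈ K, t.1.1 = t.1.2 → degAt K t.1.1 ≠ 2

/-- A super acceptable object: connected, and every vertex has degree at least 2. -/
def IsSuper (G : LoopedDigraph V) (K : Finset (TArc V)) : Prop :=
  G.IsConnectedObj K ∧ ∀ v, 2 ≤ degAt K v

end LoopedDigraph


/-! ### Auxiliary lemmas for the proof -/

open ChordDiagram LoopedDigraph

def jcolEquiv : JCol ≃ Option (Bool × Bool) where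
  toFun c := match c with
    | .I => none | .Bp ε => some (true, ε) | .Bm ε => some (false, ε)
  invFun o := match o with
    | none => .I | some (true, ε) => .Bp ε | some (false, ε) => .Bm ε
  left_inv := by rintro (_|_|_) <;> rfl
  right_inv := by rintro (_|⟨(_|_), _⟩) <;> rfl

lemma sInt_eq {n : ℕ} (c : Fin n → Option (Bool × Bool)) (w : Fin n) :
    sInt c w = lsign (jcolEquiv.symm (c w)) := by
  rcases h : c w with _ | ⟨(_|_), (_|_)⟩ <;> simp [sInt, lsign, jcolEquiv, h]

namespace ChordDiagram
variable {n : ℕ} (D : ChordDiagram n)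

lemma eq_of_l_eq_l {i j : Fin n} (h : D.l i = D.l j) : i = j := D.mono.injective h

lemma eq_of_r_eq_r {i j : Fin n} (h : D.r i = D.r j) : i = j := by
  obtain ⟨k, -, hk⟩ := D.cover (D.r j)
  rw [hk i (Or.inr h), hk j (Or.inr rfl)]

lemma l_ne_r (i j : Fin n) : D.l i ≠ D.r j := by
  intro h
  obtain ⟨k, -, hk⟩ := D.cover (D.r j)
  have := (hk i (Or.inl h)).trans (hk j (Or.inr rfl)).symm
  subst this
  exact absurd h (ne_of_lt (D.lr i))

lemma kOf_eq (ρ : Fin n → JCol) (p : Fin (2 * n)) :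
    D.kOf ρ p = ∑ w, lsign (ρ w) *
      ((if D.l w < p then 1 else 0) - (if D.r w < p then 1 else 0)) := by
  unfold kOf delta
  rw [Finset.sum_comm]
  refine Finset.sum_congr rfl fun w _ => ?_
  rw [Finset.sum_add_distrib, Finset.sum_ite_eq, Finset.sum_ite_eq]
  simp only [Finset.mem_filter, Finset.mem_univ, true_and]
  split_ifs <;> ring

end ChordDiagram
open ChordDiagram LoopedDigraph

set_option maxHeartbeats 2000000 in
lemma key {n : ℕ} (D : ChordDiagram n) (c : Fin n → Option (Bool × Bool)) (v w : Fin n)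
    (δ ε : Bool) (hv : c v = some (δ, ε)) (bar : Bool) :
    ((if ((v, w) ∈ (LID D).arcs)
       then (LID D).zfun (fun _ => (1 : Polynomial ℚ)) c bar v (v, w) else 0)
    + (if w = v then 0 else
       if ((w, v) ∈ (LID D).arcs)
       then (LID D).zfun (fun _ => (1 : Polynomial ℚ)) c bar v (w, v) else 0))
    = (((sInt c w) *
        ((if D.l w < (if δ = bar then D.r v else D.l v) then 1 else 0)
         - (if D.r w < (if δ = bar then D.r v else D.l v) then 1 else 0)) : ℤ)
          : Polynomial ℚ) := by
  have hlrv := D.lr v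
  have hlrw := D.lr w
  have hlt : v < w ↔ D.l v < D.l w := (D.mono.lt_iff_lt).symm
  have hlt' : w < v ↔ D.l w < D.l v := (D.mono.lt_iff_lt).symm
  have h4 : D.l w = D.l v → w = v := fun h => D.eq_of_l_eq_l h
  have h7 : D.r w = D.r v → w = v := fun h => D.eq_of_r_eq_r h
  have h5 : D.r w ≠ D.l v := fun h => D.l_ne_r v w h.symm
  have h6 : D.l w ≠ D.r v := D.l_ne_r w v
  have hred1 : ((v, w) ∈ (LID D).red) ↔ D.Contained v w := by
    simp [LID]
  have hred2 : ((w, v) ∈ (LID D).red) ↔ D.Contained w v := by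
    simp [LID]
  simp only [LID, zfun, hv, Finset.mem_filter, Finset.mem_univ, true_and] at hred1 hred2 ⊢
  clear hred1 hred2
  by_cases hw : w = v
  · subst hw
    cases δ <;> cases bar <;>
      (simp only [ChordDiagram.Contained, ChordDiagram.Intersect] at * <;>
       split_ifs <;> first | (push_cast; ring1) | omega | (exfalso; omega) | simp_all)
  · have hlw : D.l w ≠ D.l v := fun h => hw (h4 h)
    have hrw : D.r w ≠ D.r v := fun h => hw (h7 h)
    cases δ <;> cases bar <;>
      (simp only [ChordDiagram.Contained, ChordDiagram.Intersect] at * <;>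
       split_ifs <;> first | (push_cast; ring1) | omega | (exfalso; omega) | simp_all)
lemma sum_pairs {α R : Type*} [Fintype α] [DecidableEq α] [AddCommMonoid R]
    (s : Finset (α × α)) (f : α × α → R) (v : α)
    (hz : ∀ e : α × α, e.1 ≠ v → e.2 ≠ v → f e = 0) :
    ∑ e ∈ s, f e =
      ∑ w, ((if (v, w) ∈ s then f (v, w) else 0) +
            (if w = v then 0 else if (w, v) ∈ s then f (w, v) else 0)) := by
  have h1 : ∀ i : α, i ≠ v → (∑ j, if (i, j) ∈ s then f (i, j) else 0)
      = (if (i, v) ∈ s then f (i, v) else 0) := by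
    intro i hi
    refine Finset.sum_eq_single_of_mem v (Finset.mem_univ v) fun j _ hj => ?_
    rw [hz (i, j) hi hj]; simp
  calc ∑ e ∈ s, f e = ∑ i, ∑ j, if (i, j) ∈ s then f (i, j) else 0 := by
        rw [show (∑ e ∈ s, f e) = ∑ e : α × α, if e ∈ s then f e else 0 by
          rw [Finset.sum_ite_mem, Finset.univ_inter], Fintype.sum_prod_type]
    _ = ∑ i, (if i = v then (∑ j, if (v, j) ∈ s then f (v, j) else 0)
          else (if (i, v) ∈ s then f (i, v) else 0)) := by
        refine Finset.sum_congr rfl fun i _ => ?_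
        by_cases hi : i = v
        · subst hi; rw [if_pos rfl]
        · rw [if_neg hi, h1 i hi]
    _ = ∑ i, ((if i = v then (∑ j, if (v, j) ∈ s then f (v, j) else 0) else 0)
          + (if i = v then 0 else (if (i, v) ∈ s then f (i, v) else 0))) := by
        refine Finset.sum_congr rfl fun i _ => ?_
        split_ifs <;> simp
    _ = _ := by
        rw [Finset.sum_add_distrib, Finset.sum_add_distrib, Finset.sum_ite_eq',
          if_pos (Finset.mem_univ v)]

lemma sum_zfun {n : ℕ} (D : ChordDiagram n) (c : Fin n → Option (Bool × Bool)) (v : Fin n)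
    (δ ε : Bool) (hv : c v = some (δ, ε)) (bar : Bool) :
    ∑ e ∈ (LID D).arcs, (LID D).zfun (fun _ => (1 : Polynomial ℚ)) c bar v e
    = ((D.kOf (fun w => jcolEquiv.symm (c w)) (if δ = bar then D.r v else D.l v) : ℤ)
        : Polynomial ℚ) := by
  have hz : ∀ e : Fin n × Fin n, e.1 ≠ v → e.2 ≠ v →
      (LID D).zfun (fun _ => (1 : Polynomial ℚ)) c bar v e = 0 := fun e h1 h2 => by
    simp [LoopedDigraph.zfun, hv, h1, h2]
  rw [sum_pairs _ _ v hz, D.kOf_eq, Int.cast_sum]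
  refine Finset.sum_congr rfl fun w _ => ?_
  rw [key D c v w δ ε hv bar, sInt_eq]
lemma omega_eq {n : ℕ} (D : ChordDiagram n) (ρ : Fin n → JCol) (v : Fin n)
    (δ ε : Bool) (hv : jcolEquiv (ρ v) = some (δ, ε)) :
    D.omega ρ v = (LID D).omegaC Polynomial.X (fun _ => 1)
      (fun w => jcolEquiv (ρ w)) v := by
  have hρ : (fun w => jcolEquiv.symm (jcolEquiv (ρ w))) = ρ := by
    funext w; simp
  have hρv : ρ v = jcolEquiv.symm (some (δ, ε)) := by
    rw [← hv]; simp
  simp only [LoopedDigraph.omegaC, hv]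
  rw [sum_zfun D _ v δ ε hv false, sum_zfun D _ v δ ε hv true, hρ]
  cases δ <;> simp [ChordDiagram.omega, hρv, jcolEquiv]

/-- For every chord diagram `D`, the colored Jones weight equals the state sum `J′` of
its labeled intersection digraph with all variables set to `1`. -/
theorem WJ_eq_J'_LID {n : ℕ} (D : ChordDiagram n) :
    D.WJ = (LID D).J' Polynomial.X (fun _ => 1) := by
  rw [ChordDiagram.WJ, LoopedDigraph.J']
  refine Fintype.sum_equiv (Equiv.piCongrRight fun _ : Fin n => jcolEquiv) _ _ fun ρ => ?_
  simp only [Equiv.piCongrRight_apply, Pi.map_apply]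
  rw [← Finset.prod_filter_mul_prod_filter_not Finset.univ
    (fun v => (jcolEquiv (ρ v)).isSome = true) (D.omega ρ)]
  have h1 : Finset.univ.filter (fun v => ¬((jcolEquiv (ρ v)).isSome = true))
      = Finset.univ.filter (fun v => jcolEquiv (ρ v) = none) := by
    apply Finset.filter_congr; intro v _
    rcases h : jcolEquiv (ρ v) with _ | p <;> simp [h]
  have h2 : ∏ v ∈ Finset.univ.filter (fun v => jcolEquiv (ρ v) = none),
      D.omega ρ v = (Polynomial.X + 2) ^
        (Finset.univ.filter (fun v => jcolEquiv (ρ v) = none)).card := by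
    rw [Finset.prod_congr rfl (fun v hv => ?_), Finset.prod_const]
    have h3 : jcolEquiv (ρ v) = none := (Finset.mem_filter.mp hv).2
    have h4 : ρ v = .I := by
      have := congrArg jcolEquiv.symm h3
      simp at this; exact this.trans rfl
    simp [ChordDiagram.omega, h4]
  have h5 : ∏ v ∈ Finset.univ.filter (fun v => (jcolEquiv (ρ v)).isSome = true),
      D.omega ρ v = ∏ v ∈ Finset.univ.filter
        (fun v => (jcolEquiv (ρ v)).isSome = true),
        (LID D).omegaC Polynomial.X (fun _ => 1) (fun w => jcolEquiv (ρ w)) v := by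
    refine Finset.prod_congr rfl fun v hv => ?_
    have := (Finset.mem_filter.mp hv).2
    rcases h : jcolEquiv (ρ v) with _ | ⟨δ, ε⟩
    · rw [h] at this; simp at this
    · exact omega_eq D ρ v δ ε h
  rw [h1, h2, h5, mul_comm]
  rfl
end

section
/- Let G = (V,A) be a looped digraph, V′ ⊆ V, and h a function as in the definition of A(V′,h). If v ∈ W₁ and both arcs of h(v) are uncolored and oriented the same way with respect to v (both enter v or both leave v, a loop counting as leaving), then A(V′,h) = 0. -/
open Finset

variable {V : Type*} [Fintype V] [DecidableEq V]

/-! ### Good collections and the state sum `C(X, V′, K)` -/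

namespace LoopedDigraph

variable {R : Type*} [CommRing R] (G : LoopedDigraph V) (x : V × V → R)
  (c : V → Option (Bool × Bool))

/-- On an uncolored arc at `v` at most one of `z_v`, `z̄_v` is nonzero, and which one depends
only on `δ_v` and on whether the arc leaves or enters `v`. -/
theorem zfun_true_mul_zfun_false_eq_zero_of_same_orientation {v : V} {s : Finset (V × V)}
    (hunc : ∀ e ∈ s, e ∉ G.red)
    (hsame : (∀ e ∈ s, e.1 = v) ∨ (∀ e ∈ s, e.2 = v ∧ e.1 ≠ v))
    {e e' : V × V} (he : e ∈ s) (he' : e' ∈ s) :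
    G.zfun x c true v e * G.zfun x c false v e' = 0 := by
  unfold zfun
  rcases c v with _ | ⟨δ, ε⟩
  · simp
  rcases hsame with hout | hin
  · cases δ <;> simp [hunc e he, hunc e' he', hout e he, hout e' he']
  · cases δ <;> simp [hunc e he, hunc e' he', hin e he, hin e' he']

end LoopedDigraph

namespace HData

variable {R : Type*} [CommRing R] {G : LoopedDigraph V} {V' : Finset V} (H : HData G V')
  (lam : R) (x : V × V → R) (c : V → Option (Bool × Bool))

/-- At `v ∈ W₁` the summand contains the factor `z̄_v(g v) · z_v(f v)` with `g v, f v ∈ h v`. -/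
theorem Bterm_eq_zero_of_mem_W1 {v : V} (hv : v ∈ H.W1) {V2 : Finset V}
    {gs : V → Finset (V × V)} (hgs : gs ∈ H.choices (H.W1 ∪ V2))
    (hz : ∀ e ∈ H.h v, ∀ e' ∈ H.h v, G.zfun x c true v e * G.zfun x c false v e' = 0) :
    H.Bterm lam x c V2 gs = 0 := by
  obtain ⟨hsub, hcard, -⟩ := (mem_filter.mp hgs).2 v
  have hcard_h : (H.h v).card = 2 := (mem_filter.mp hv).2
  have hcard_g : (gs v).card = 1 := hcard (mem_union_left _ hv)
  obtain ⟨eg, heg⟩ := card_pos.mp (by omega : 0 < (gs v).card)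
  obtain ⟨ef, hef⟩ := card_pos.mp
    (by rw [card_sdiff_of_subset hsub]; omega : 0 < (H.h v \ gs v).card)
  have hg_dvd : G.zfun x c true v eg ∣ ∏ w ∈ H.W1 ∪ V2, ∏ e ∈ gs w, G.zfun x c true w e :=
    (dvd_prod_of_mem _ heg).trans (dvd_prod_of_mem _ (mem_union_left _ hv))
  have hf_dvd : G.zfun x c false v ef ∣
      ∏ w ∈ H.W1 ∪ (H.W2 \ (H.W1 ∪ V2)), ∏ e ∈ H.h w \ gs w, G.zfun x c false w e :=
    (dvd_prod_of_mem _ hef).trans (dvd_prod_of_mem _ (mem_union_left _ hv))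
  have hprod := mul_dvd_mul hg_dvd hf_dvd
  rw [hz eg (hsub heg) ef (mem_sdiff.mp hef).1, zero_dvd_iff] at hprod
  rw [Bterm, mul_assoc, hprod, mul_zero]

theorem Aval_eq_zero_of_mem_W1 {v : V} (hv : v ∈ H.W1)
    (hz : ∀ c, ∀ e ∈ H.h v, ∀ e' ∈ H.h v,
      G.zfun x c true v e * G.zfun x c false v e' = 0) :
    H.Aval lam x = 0 :=
  sum_eq_zero fun c _ => ite_eq_right_iff.mpr fun _ =>
    sum_eq_zero fun _ _ => sum_eq_zero fun _ hgs =>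
      H.Bterm_eq_zero_of_mem_W1 lam x c hv hgs (hz c)

end HData

/-- **Lemma.** If `v ∈ W₁` and both arcs of `h(v)` are uncolored and oriented the same
way with respect to `v` (both enter or both leave, a loop counting as leaving), then
`A(V′,h) = 0`. -/
theorem Aval_eq_zero_of_same_orientation {V : Type*} [Fintype V] [DecidableEq V]
    (G : LoopedDigraph V) (V' : Finset V) (H : HData G V') (v : V)
    (hv : v ∈ H.W1)
    (hunc : ∀ e ∈ H.h v, e ∉ G.red)
    (hsame : (∀ e ∈ H.h v, e.1 = v) ∨ (∀ e ∈ H.h v, e.2 = v ∧ e.1 ≠ v)) :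
    H.Aval (R := MvPolynomial (V × V) (Polynomial ℚ)) (MvPolynomial.C Polynomial.X)
      (fun e => MvPolynomial.X e) = 0 :=
  H.Aval_eq_zero_of_mem_W1 _ _ hv fun c _ he _ he' =>
    G.zfun_true_mul_zfun_false_eq_zero_of_same_orientation _ c hunc hsame he he'
end

section
/- Let G = (V,A) be a looped digraph, V′ ⊆ V, and h a function as in the definition of A(V′,h). If A(V′,h) ≠ 0, then: (a) for every element (e,w) of h(W₂), both endpoints of the arc e belong to W₂; and (b) for every v ∈ W₂ the number of arc-ends at v among the elements of h(W₂) equals 2|h(v)| (a loop at v counting two ends), so in particular every vertex of W₂ has degree 2 or 4 in h(W₂). -/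
open Finset

variable {V : Type*} [Fintype V] [DecidableEq V]

section Aux

open LoopedDigraph

variable {V : Type*} [Fintype V] [DecidableEq V]

/-- The "s-argument" of a thickened arc: the endpoint other than the thickening
vertex (the thickening vertex itself for a loop). -/
def sarg (p : (V × V) × V) : V := if p.1.1 = p.2 then p.1.2 else p.1.1

variable {G : LoopedDigraph V} {V' : Finset V}

/-- The number of thickened arcs of `h(W₂)` whose s-argument is `v`. -/
def mcount (H : HData G V') (v : V) : ℕ :=
  ∑ w ∈ H.W2, ((H.h w).filter fun e => sarg (e, w) = v).card

lemma mem_hW2 {H : HData G V'} {p : (V × V) × V} :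
    p ∈ H.hW2 ↔ p.2 ∈ H.W2 ∧ p.1 ∈ H.h p.2 := by
  simp [HData.hW2]

lemma sum_hW2 {M : Type*} [AddCommMonoid M] (H : HData G V') (f : (V × V) × V → M) :
    ∑ p ∈ H.hW2, f p = ∑ w ∈ H.W2, ∑ e ∈ H.h w, f (e, w) := by
  rw [HData.hW2, Finset.sum_filter, Fintype.sum_prod_type, Finset.sum_comm]
  have : ∀ w : V, (∑ e : V × V, if w ∈ H.W2 ∧ e ∈ H.h w then f (e, w) else 0)
      = if w ∈ H.W2 then ∑ e ∈ H.h w, f (e, w) else 0 := by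
    intro w
    split_ifs with hw
    · simp [hw, Finset.sum_ite_mem]
    · simp [hw]
  rw [Finset.sum_congr rfl fun w _ => this w]
  simp [Finset.sum_ite_mem]

lemma mem_W1 {H : HData G V'} {v : V} : v ∈ H.W1 ↔ v ∈ V' ∧ (H.h v).card = 2 := by
  simp [HData.W1]

lemma mem_W2 {H : HData G V'} {v : V} : v ∈ H.W2 ↔ v ∈ V' ∧ 1 ≤ (H.h v).card := by
  simp [HData.W2]

lemma W1_subset_W2 (H : HData G V') : H.W1 ⊆ H.W2 := by
  intro v hv
  rw [mem_W1] at hv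
  rw [mem_W2]
  exact ⟨hv.1, by have := hv.2; omega⟩

lemma W2_subset (H : HData G V') : H.W2 ⊆ V' := fun v hv => (mem_W2.1 hv).1

lemma card_h_eq_one {H : HData G V'} {v : V} (h2 : v ∈ H.W2) (h1 : v ∉ H.W1) :
    (H.h v).card = 1 := by
  rw [mem_W2] at h2
  rw [mem_W1] at h1
  have h1' : (H.h v).card ≠ 2 := fun h => h1 ⟨h2.1, h⟩
  have := H.card_le v
  have := h2.2
  omega

lemma sum_mcount (H : HData G V') :
    ∑ v : V, mcount H v = H.W2.card + H.W1.card := by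
  unfold mcount
  rw [Finset.sum_comm]
  have : ∀ w ∈ H.W2, (∑ v : V, ((H.h w).filter fun e => sarg (e, w) = v).card)
      = (H.h w).card := by
    intro w _
    have : ∀ v : V, ((H.h w).filter fun e => sarg (e, w) = v).card
        = ∑ e ∈ H.h w, if sarg (e, w) = v then 1 else 0 := by
      intro v; rw [Finset.card_filter]
    rw [Finset.sum_congr rfl fun v _ => this v, Finset.sum_comm]
    simp
  rw [Finset.sum_congr rfl this]
  -- ∑ w ∈ W₂, (h w).card = W₂.card + W₁.card
  have hcard : ∀ w ∈ H.W2, (H.h w).card = 1 + (if w ∈ H.W1 then 1 else 0) := by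
    intro w hw
    by_cases h1 : w ∈ H.W1
    · simp [h1, (mem_W1.1 h1).2]
    · simp [h1, card_h_eq_one hw h1]
  rw [Finset.sum_congr rfl hcard, Finset.sum_add_distrib]
  simp [Finset.sum_ite_mem, Finset.inter_eq_right.2 (W1_subset_W2 H)]

lemma endCountAt_eq (H : HData G V') {v : V} (hv : v ∈ H.W2) :
    endCountAt H.hW2 v = (H.h v).card + mcount H v := by
  unfold endCountAt
  rw [sum_hW2]
  have key : ∀ w ∈ H.W2, ∀ e ∈ H.h w,
      ((if e.1 = v then 1 else 0) + (if e.2 = v then 1 else 0) : ℕ)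
      = (if w = v then 1 else 0) + (if sarg (e, w) = v then 1 else 0) := by
    intro w _ e he
    rcases H.incident w e he with h1 | h2
    · simp [sarg, h1]
    · by_cases h1 : e.1 = w
      · simp [sarg, h1, h2]
      · simp [sarg, h1, h2, Nat.add_comm]
  rw [Finset.sum_congr rfl fun w hw => Finset.sum_congr rfl fun e he => key w hw e he]
  have : ∀ w ∈ H.W2, ∑ e ∈ H.h w,
      (((if w = v then 1 else 0) + (if sarg (e, w) = v then 1 else 0)) : ℕ)
      = (H.h w).card * (if w = v then 1 else 0)
        + ((H.h w).filter fun e => sarg (e, w) = v).card := by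
    intro w _
    rw [Finset.sum_add_distrib, Finset.sum_const, Finset.card_filter]
    simp [mul_comm]
  rw [Finset.sum_congr rfl this, Finset.sum_add_distrib]
  have : ∑ w ∈ H.W2, (H.h w).card * (if w = v then 1 else 0) = (H.h v).card := by
    rw [Finset.sum_eq_single v]
    · simp
    · intro w _ hw; simp [hw]
    · intro h; exact absurd hv h
  rw [this]
  rfl

end Aux
section Aux2

open LoopedDigraph

variable {V : Type*} [Fintype V] [DecidableEq V]

/-- Flip the `ε`-component of the color at `v`. -/
def flipE (v : V) (c : V → Option (Bool × Bool)) : V → Option (Bool × Bool) :=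
  fun w => if w = v then (c w).map (fun p => (p.1, !p.2)) else c w

/-- Flip the `δ`-component of the color at `v`. -/
def flipD (v : V) (c : V → Option (Bool × Bool)) : V → Option (Bool × Bool) :=
  fun w => if w = v then (c w).map (fun p => (!p.1, p.2)) else c w

variable {G : LoopedDigraph V} {V' : Finset V}

lemma sInt_flipE_ne {v u : V} {c : V → Option (Bool × Bool)} (h : u ≠ v) :
    LoopedDigraph.sInt (flipE v c) u = LoopedDigraph.sInt c u := by
  simp [LoopedDigraph.sInt, flipE, h]

lemma sInt_flipD {v u : V} {c : V → Option (Bool × Bool)} :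
    LoopedDigraph.sInt (flipD v c) u
      = if u = v then - LoopedDigraph.sInt c u else LoopedDigraph.sInt c u := by
  by_cases h : u = v
  · subst h
    rcases hc : c u with _ | ⟨δ, ε⟩ <;> simp [LoopedDigraph.sInt, flipD, hc] <;>
      cases δ <;> cases ε <;> simp
  · simp [LoopedDigraph.sInt, flipD, h]

lemma isSome_flipE {v w : V} {c : V → Option (Bool × Bool)} :
    ((flipE v c) w).isSome = (c w).isSome := by
  by_cases h : w = v <;> simp [flipE, h]

lemma isSome_flipD {v w : V} {c : V → Option (Bool × Bool)} :
    ((flipD v c) w).isSome = (c w).isSome := by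
  by_cases h : w = v <;> simp [flipD, h]

lemma flipE_flipE {v : V} {c : V → Option (Bool × Bool)} : flipE v (flipE v c) = c := by
  funext w
  by_cases h : w = v
  · subst h; rcases hc : c w with _ | ⟨δ, ε⟩ <;> simp [flipE, hc]
  · simp [flipE, h]

lemma flipD_flipD {v : V} {c : V → Option (Bool × Bool)} : flipD v (flipD v c) = c := by
  funext w
  by_cases h : w = v
  · subst h; rcases hc : c w with _ | ⟨δ, ε⟩ <;> simp [flipD, hc]
  · simp [flipD, h]

/-- `(Z3)`: if the color of the s-argument is `none` then the `z`-value vanishes. -/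
lemma zfun_eq_zero {R : Type*} [CommRing R] (x : V × V → R)
    {c : V → Option (Bool × Bool)} {b : Bool} {w : V} {e : V × V}
    (h : c (sarg (e, w)) = none) : G.zfun x c b w e = 0 := by
  rcases hc : c w with _ | ⟨δ, ε⟩
  · simp [LoopedDigraph.zfun, hc]
  · by_cases h1 : e.1 = w
    · have : c e.2 = none := by simpa [sarg, h1] using h
      simp [LoopedDigraph.zfun, hc, h1, LoopedDigraph.sInt, this]
    · by_cases h2 : e.2 = w
      · have : c e.1 = none := by simpa [sarg, h1] using h
        simp [LoopedDigraph.zfun, hc, h1, h2, LoopedDigraph.sInt, this]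
      · simp [LoopedDigraph.zfun, hc, h1, h2]

end Aux2
section Aux3

open LoopedDigraph

variable {V : Type*} [Fintype V] [DecidableEq V]
variable {G : LoopedDigraph V}

/-- `(Z1)`: flipping `ε` at a vertex that is not the s-argument does not change `z`. -/
lemma zfun_flipE {R : Type*} [CommRing R] (x : V × V → R)
    {c : V → Option (Bool × Bool)} {v : V} {b : Bool} {w : V} {e : V × V}
    (hne : sarg (e, w) ≠ v) :
    G.zfun x (flipE v c) b w e = G.zfun x c b w e := by
  rcases hc : c w with _ | ⟨δ, ε⟩
  · have hc' : flipE v c w = none := by simp [flipE, hc]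
    simp [LoopedDigraph.zfun, hc, hc']
  · have hc' : flipE v c w = some (δ, if w = v then !ε else ε) := by
      by_cases h : w = v
      · subst h; simp [flipE, hc]
      · simp [flipE, hc, h]
    by_cases h1 : e.1 = w
    · have h2 : e.2 ≠ v := by simpa [sarg, h1] using hne
      simp [LoopedDigraph.zfun, hc, hc', h1, sInt_flipE_ne h2]
    · by_cases h2 : e.2 = w
      · have h3 : e.1 ≠ v := by simpa [sarg, h1] using hne
        simp [LoopedDigraph.zfun, hc, hc', h1, h2, sInt_flipE_ne h3]
      · simp [LoopedDigraph.zfun, hc, hc', h1, h2]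

/-- `(Z2)`: flipping `δ` at `v` exchanges `z` and `z̄` at `v` and multiplies by `-1`
for each occurrence of `v` as an s-argument. -/
lemma zfun_flipD {R : Type*} [CommRing R] (x : V × V → R)
    {c : V → Option (Bool × Bool)} {v : V} {b : Bool} {w : V} {e : V × V} :
    G.zfun x (flipD v c) b w e
      = (if sarg (e, w) = v then (-1 : R) else 1) *
        G.zfun x c (if w = v then !b else b) w e := by
  rcases hc : c w with _ | ⟨δ, ε⟩
  · have hc' : flipD v c w = none := by simp [flipD, hc]
    simp [LoopedDigraph.zfun, hc, hc']
  · by_cases hw : w = v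
    · subst hw
      have hc' : flipD w c w = some (!δ, ε) := by simp [flipD, hc]
      by_cases hr : e ∈ G.red
      · by_cases h1 : e.1 = w
        · have h2 : e.2 ≠ w := by
            intro h2
            exact G.red_no_loop w (by
              have : e = (w, w) := Prod.ext h1 h2
              rwa [this] at hr)
          simp only [LoopedDigraph.zfun, hc, hc', hr, if_true, h1, sarg]
          rw [sInt_flipD]
          simp [h1, h2]
        · simp [LoopedDigraph.zfun, hc, hc', hr, h1, sarg]
      · by_cases h1 : e.1 = w
        · by_cases h2 : e.2 = w
          · -- loop at w
            simp only [LoopedDigraph.zfun, hc, hc', hr, if_false, h1, if_true, sarg]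
            rw [sInt_flipD]
            simp only [h1, h2, if_true]
            cases δ <;> cases b <;> simp <;> ring
          · simp only [LoopedDigraph.zfun, hc, hc', hr, if_false, h1, if_true, sarg]
            rw [sInt_flipD]
            simp only [h1, h2, if_true, if_false]
            cases δ <;> cases b <;> simp
        · by_cases h2 : e.2 = w
          · simp only [LoopedDigraph.zfun, hc, hc', hr, if_false, h1, h2, if_true, sarg]
            rw [sInt_flipD]
            have h3 : e.1 ≠ w := h1
            simp only [h1, h2, if_true, if_false, h3]
            cases δ <;> cases b <;> simp
          · simp [LoopedDigraph.zfun, hc, hc', hr, h1, h2, sarg]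
    · have hcc : flipD v c w = some (δ, ε) := by simp [flipD, hw, hc]
      have hb : (if w = v then !b else b) = b := if_neg hw
      have hw' : ¬ v = w := fun h => hw h.symm
      rw [hb]
      by_cases h1 : e.1 = w
      · have hs : sarg (e, w) = e.2 := by simp [sarg, h1]
        rw [hs]
        simp only [LoopedDigraph.zfun, hc, hcc, sInt_flipD]
        by_cases h4 : e.2 = v <;> by_cases hr : e ∈ G.red <;>
          simp [h1, h4, hr, hw'] <;> split_ifs <;> push_cast <;> ring
      · by_cases h2 : e.2 = w
        · have hs : sarg (e, w) = e.1 := by simp [sarg, h1]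
          rw [hs]
          simp only [LoopedDigraph.zfun, hc, hcc, sInt_flipD]
          by_cases h4 : e.1 = v <;> by_cases hr : e ∈ G.red <;>
            simp [h1, h2, h4, hr, hw'] <;> split_ifs <;> push_cast <;> ring
        · simp [LoopedDigraph.zfun, hc, hcc, sarg, h1, h2]

end Aux3
section Aux4

open LoopedDigraph

variable {V : Type*} [Fintype V] [DecidableEq V]
variable {G : LoopedDigraph V} {V' : Finset V}

lemma mem_choices_iff {H : HData G V'} {S : Finset V} {gs : V → Finset (V × V)} :
    gs ∈ H.choices S ↔ ∀ v, gs v ⊆ H.h v ∧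
      (v ∈ S → (gs v).card = 1) ∧ (v ∉ S → gs v = ∅) := by
  simp [HData.choices]

lemma union_subset_W2 (H : HData G V') {V2 : Finset V} (hV2 : V2 ⊆ H.W2 \ H.W1) :
    H.W1 ∪ V2 ⊆ H.W2 :=
  Finset.union_subset (W1_subset_W2 H) (hV2.trans Finset.sdiff_subset)

/-- The product part of a `B`-term rewritten as a single product over `h(W₂)`. -/
lemma Bterm_eq {R : Type*} [CommRing R] (H : HData G V') (lam : R) (x : V × V → R)
    (c : V → Option (Bool × Bool)) {V2 : Finset V} (hV2 : V2 ⊆ H.W2 \ H.W1)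
    {gs : V → Finset (V × V)} (hgs : gs ∈ H.choices (H.W1 ∪ V2)) :
    H.Bterm lam x c V2 gs =
      (-1 : R) ^ (∑ v ∈ V', ((c v).elim 0 fun p => if p.2 then 1 else 0 : ℕ)) *
      (-1 : R) ^ (H.W1 ∪ V2).card *
      (lam + 1) ^ (V' \ (H.W1 ∪ V2)).card *
      ∏ w ∈ H.W2, ∏ e ∈ H.h w, G.zfun x c (decide (e ∈ gs w)) w e := by
  rw [mem_choices_iff] at hgs
  have hsub : ∀ v, gs v ⊆ H.h v := fun v => (hgs v).1
  have hone : ∀ v ∈ H.W1 ∪ V2, (gs v).card = 1 := fun v hv => (hgs v).2.1 hv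
  have hnil : ∀ v, v ∉ H.W1 ∪ V2 → gs v = ∅ := fun v hv => (hgs v).2.2 hv
  have hWsub := union_subset_W2 H hV2
  have hinner : ∀ w, (∏ e ∈ H.h w, G.zfun x c (decide (e ∈ gs w)) w e)
      = (∏ e ∈ gs w, G.zfun x c true w e) *
        (∏ e ∈ H.h w \ gs w, G.zfun x c false w e) := by
    intro w
    rw [← Finset.prod_sdiff (hsub w), mul_comm]
    congr 1
    · exact Finset.prod_congr rfl fun e he => by simp [he]
    · refine Finset.prod_congr rfl fun e he => ?_
      have : e ∉ gs w := (Finset.mem_sdiff.1 he).2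
      simp [this]
  have hA : (∏ w ∈ H.W2, ∏ e ∈ gs w, G.zfun x c true w e)
      = ∏ w ∈ H.W1 ∪ V2, ∏ e ∈ gs w, G.zfun x c true w e := by
    refine (Finset.prod_subset hWsub fun w _ hnw => ?_).symm
    simp [hnil w hnw]
  have hB : (∏ w ∈ H.W2, ∏ e ∈ H.h w \ gs w, G.zfun x c false w e)
      = ∏ w ∈ H.W1 ∪ (H.W2 \ (H.W1 ∪ V2)), ∏ e ∈ H.h w \ gs w, G.zfun x c false w e := by
    refine (Finset.prod_subset (Finset.union_subset (W1_subset_W2 H)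
      Finset.sdiff_subset) fun w hw hnw => ?_).symm
    have hw1 : w ∉ H.W1 := fun h => hnw (Finset.mem_union_left _ h)
    have hwu : w ∈ H.W1 ∪ V2 := by
      by_contra hcon
      exact hnw (Finset.mem_union_right _ (Finset.mem_sdiff.2 ⟨hw, hcon⟩))
    have heq : gs w = H.h w := by
      apply Finset.eq_of_subset_of_card_le (hsub w)
      rw [hone w hwu, card_h_eq_one hw hw1]
    rw [heq]
    simp
  calc H.Bterm lam x c V2 gs
      = (-1 : R) ^ (∑ v ∈ V', ((c v).elim 0 fun p => if p.2 then 1 else 0 : ℕ)) *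
        (-1 : R) ^ (H.W1 ∪ V2).card *
        (lam + 1) ^ (V' \ (H.W1 ∪ V2)).card *
        ((∏ w ∈ H.W2, ∏ e ∈ gs w, G.zfun x c true w e) *
         (∏ w ∈ H.W2, ∏ e ∈ H.h w \ gs w, G.zfun x c false w e)) := by
        rw [HData.Bterm, hA, hB]; ring
    _ = _ := by
        rw [← Finset.prod_mul_distrib]
        congr 1
        exact (Finset.prod_congr rfl fun w _ => hinner w).symm

end Aux4
section Aux5

open LoopedDigraph

variable {V : Type*} [Fintype V] [DecidableEq V]
variable {G : LoopedDigraph V} {V' : Finset V}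

lemma neg_one_pow_flipE {R : Type*} [CommRing R] (c : V → Option (Bool × Bool))
    {v : V} (hv : v ∈ V') (hs : (c v).isSome = true) :
    (-1 : R) ^ (∑ w ∈ V', (((flipE v c) w).elim 0 fun p => if p.2 then 1 else 0 : ℕ))
      = -(-1 : R) ^ (∑ w ∈ V', ((c w).elim 0 fun p => if p.2 then 1 else 0 : ℕ)) := by
  obtain ⟨⟨δ, ε⟩, hc⟩ := Option.isSome_iff_exists.1 hs
  have herase : ∑ w ∈ V'.erase v, (((flipE v c) w).elim 0 fun p => if p.2 then 1 else 0 : ℕ)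
      = ∑ w ∈ V'.erase v, ((c w).elim 0 fun p => if p.2 then 1 else 0 : ℕ) :=
    Finset.sum_congr rfl fun w hw => by
      have hne : w ≠ v := Finset.ne_of_mem_erase hw
      simp [flipE, hne]
  rw [← Finset.add_sum_erase _ _ hv, ← Finset.add_sum_erase _ _ hv, herase]
  have h1 : (flipE v c) v = some (δ, !ε) := by simp [flipE, hc]
  rw [h1, hc]
  cases ε <;> simp [pow_add, pow_succ] <;> ring

lemma eps_sum_flipD (c : V → Option (Bool × Bool)) (v : V) :
    (∑ w ∈ V', (((flipD v c) w).elim 0 fun p => if p.2 then 1 else 0 : ℕ))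
      = ∑ w ∈ V', ((c w).elim 0 fun p => if p.2 then 1 else 0 : ℕ) :=
  Finset.sum_congr rfl fun w _ => by
    by_cases h : w = v
    · subst h; rcases hc : c w with _ | ⟨δ, ε⟩ <;> simp [flipD, hc]
    · simp [flipD, h]

lemma sarg_ne_of_mcount_zero {H : HData G V'} {v : V} (hm : mcount H v = 0)
    {w : V} (hw : w ∈ H.W2) {e : V × V} (he : e ∈ H.h w) : sarg (e, w) ≠ v := by
  unfold mcount at hm
  rw [Finset.sum_eq_zero_iff] at hm
  have h := hm w hw
  rw [Finset.card_eq_zero, Finset.filter_eq_empty_iff] at h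
  exact h he

/-- `(L2)`: if some colored vertex is never an s-argument, the state sum vanishes. -/
lemma Aval_eq_zero_of_mcount_eq_zero {R : Type*} [CommRing R] (H : HData G V')
    (lam : R) (x : V × V → R) {v : V} (hv : v ∈ V') (hm : mcount H v = 0) :
    H.Aval lam x = 0 := by
  classical
  rw [HData.Aval]
  apply Finset.sum_ninvolution (flipE v)
  · intro c
    by_cases hsupp : ∀ u, (c u).isSome = true ↔ u ∈ V'
    · have hsupp' : ∀ u, ((flipE v c) u).isSome = true ↔ u ∈ V' := fun u => by
        rw [isSome_flipE]; exact hsupp u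
      rw [if_pos hsupp, if_pos hsupp', ← Finset.sum_add_distrib]
      refine Finset.sum_eq_zero fun V2 hV2 => ?_
      rw [← Finset.sum_add_distrib]
      refine Finset.sum_eq_zero fun gs hgs => ?_
      have hV2' : V2 ⊆ H.W2 \ H.W1 := Finset.mem_powerset.1 hV2
      rw [Bterm_eq H lam x c hV2' hgs, Bterm_eq H lam x (flipE v c) hV2' hgs]
      have hprod : (∏ w ∈ H.W2, ∏ e ∈ H.h w, G.zfun x (flipE v c) (decide (e ∈ gs w)) w e)
          = ∏ w ∈ H.W2, ∏ e ∈ H.h w, G.zfun x c (decide (e ∈ gs w)) w e :=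
        Finset.prod_congr rfl fun w hw => Finset.prod_congr rfl fun e he =>
          zfun_flipE x (sarg_ne_of_mcount_zero hm hw he)
      rw [hprod, neg_one_pow_flipE c hv ((hsupp v).2 hv)]
      ring
    · have hsupp' : ¬ ∀ u, ((flipE v c) u).isSome = true ↔ u ∈ V' := fun h =>
        hsupp fun u => by rw [← isSome_flipE (v := v)]; exact h u
      rw [if_neg hsupp, if_neg hsupp', add_zero]
  · intro c hne
    by_cases hsupp : ∀ u, (c u).isSome = true ↔ u ∈ V'
    · obtain ⟨⟨δ, ε⟩, hc⟩ := Option.isSome_iff_exists.1 ((hsupp v).2 hv)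
      intro heq
      have h := congrFun heq v
      simp [flipE, hc] at h
    · exact absurd (if_neg hsupp) hne
  · intro c; exact Finset.mem_univ _
  · intro c; exact flipE_flipE

end Aux5
section Aux6

open LoopedDigraph

variable {V : Type*} [Fintype V] [DecidableEq V]
variable {G : LoopedDigraph V} {V' : Finset V}

/-- Swap the chosen arc at a degree-two vertex `v`. -/
def swapAt (H : HData G V') (v : V) (gs : V → Finset (V × V)) : V → Finset (V × V) :=
  fun w => if w = v then H.h v \ gs v else gs w

lemma swapAt_mem_choices {H : HData G V'} {V2 : Finset V} {v : V} (hv : v ∈ H.W1)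
    {gs : V → Finset (V × V)} (hgs : gs ∈ H.choices (H.W1 ∪ V2)) :
    swapAt H v gs ∈ H.choices (H.W1 ∪ V2) := by
  rw [mem_choices_iff] at hgs ⊢
  intro w
  by_cases h : w = v
  · subst h
    refine ⟨by simp [swapAt, Finset.sdiff_subset], fun _ => ?_,
      fun hmem => absurd (Finset.mem_union_left _ hv) hmem⟩
    have hcard := (hgs w).2.1 (Finset.mem_union_left _ hv)
    have h2 := (mem_W1.1 hv).2
    simp only [swapAt, if_pos]
    rw [Finset.card_sdiff_of_subset (hgs w).1, hcard, h2]
  · simpa [swapAt, h] using hgs w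

lemma swapAt_swapAt {H : HData G V'} {v : V} {gs : V → Finset (V × V)}
    (hsub : gs v ⊆ H.h v) : swapAt H v (swapAt H v gs) = gs := by
  funext w
  by_cases h : w = v
  · subst h
    simp only [swapAt, if_pos]
    exact Finset.sdiff_sdiff_eq_self hsub
  · simp [swapAt, h]

lemma prod_sign {R : Type*} [CommRing R] (H : HData G V') (v : V) :
    (∏ w ∈ H.W2, ∏ e ∈ H.h w, (if sarg (e, w) = v then (-1 : R) else 1))
      = (-1 : R) ^ (mcount H v) := by
  unfold mcount
  rw [← Finset.prod_pow_eq_pow_sum]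
  refine Finset.prod_congr rfl fun w _ => ?_
  rw [Finset.card_filter, ← Finset.prod_pow_eq_pow_sum]
  refine Finset.prod_congr rfl fun e _ => ?_
  split_ifs <;> simp

/-- `(L3)`: if a vertex of `W₁` is an s-argument an odd number of times,
the state sum vanishes. -/
lemma Aval_eq_zero_of_odd_mcount {R : Type*} [CommRing R] (H : HData G V')
    (lam : R) (x : V × V → R) {v : V} (hv : v ∈ H.W1) (hm : Odd (mcount H v)) :
    H.Aval lam x = 0 := by
  classical
  have hvV' : v ∈ V' := (mem_W1.1 hv).1
  rw [HData.Aval]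
  have step1 : ∀ c : V → Option (Bool × Bool),
      (if (∀ u, (c u).isSome = true ↔ u ∈ V') then
        ∑ V2 ∈ (H.W2 \ H.W1).powerset, ∑ gs ∈ H.choices (H.W1 ∪ V2),
          H.Bterm lam x c V2 gs
      else 0)
      = ∑ V2 ∈ (H.W2 \ H.W1).powerset, ∑ gs ∈ H.choices (H.W1 ∪ V2),
          (if (∀ u, (c u).isSome = true ↔ u ∈ V') then H.Bterm lam x c V2 gs else 0) := by
    intro c; split_ifs with h
    · rfl
    · simp
  rw [Finset.sum_congr rfl fun c _ => step1 c, Finset.sum_comm]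
  refine Finset.sum_eq_zero fun V2 hV2 => ?_
  have hV2' : V2 ⊆ H.W2 \ H.W1 := Finset.mem_powerset.1 hV2
  rw [← Finset.sum_product']
  refine Finset.sum_involution
    (fun p _ => (flipD v p.1, swapAt H v p.2)) ?_ ?_ ?_ ?_
  · -- sum of paired terms is zero
    rintro ⟨c, gs⟩ hp
    have hgs : gs ∈ H.choices (H.W1 ∪ V2) := (Finset.mem_product.1 hp).2
    by_cases hsupp : ∀ u, (c u).isSome = true ↔ u ∈ V'
    · have hsupp' : ∀ u, ((flipD v c) u).isSome = true ↔ u ∈ V' := fun u => by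
        rw [isSome_flipD]; exact hsupp u
      simp only [if_pos hsupp, if_pos hsupp']
      rw [Bterm_eq H lam x c hV2' hgs,
        Bterm_eq H lam x (flipD v c) hV2' (swapAt_mem_choices hv hgs)]
      have key : (∏ w ∈ H.W2, ∏ e ∈ H.h w,
            G.zfun x (flipD v c) (decide (e ∈ swapAt H v gs w)) w e)
          = (∏ w ∈ H.W2, ∏ e ∈ H.h w, (if sarg (e, w) = v then (-1 : R) else 1)) *
            ∏ w ∈ H.W2, ∏ e ∈ H.h w, G.zfun x c (decide (e ∈ gs w)) w e := by
        rw [← Finset.prod_mul_distrib]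
        refine Finset.prod_congr rfl fun w hw => ?_
        rw [← Finset.prod_mul_distrib]
        refine Finset.prod_congr rfl fun e he => ?_
        rw [zfun_flipD]
        congr 1
        congr 1
        by_cases h : w = v
        · subst h
          have hmem : e ∈ H.h w := he
          simp only [swapAt, if_pos]
          by_cases hg : e ∈ gs w <;> simp [hg, hmem]
        · simp [swapAt, h]
      rw [key, prod_sign, hm.neg_one_pow, eps_sum_flipD]
      ring
    · have hsupp' : ¬ ∀ u, ((flipD v c) u).isSome = true ↔ u ∈ V' := fun h =>
        hsupp fun u => by rw [← isSome_flipD (v := v)]; exact h u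
      rw [if_neg hsupp, if_neg hsupp', add_zero]
  · -- no fixed points on nonzero terms
    rintro ⟨c, gs⟩ hp hne heq
    by_cases hsupp : ∀ u, (c u).isSome = true ↔ u ∈ V'
    · obtain ⟨⟨δ, ε⟩, hc⟩ := Option.isSome_iff_exists.1 ((hsupp v).2 hvV')
      have h := congrFun (congrArg Prod.fst heq) v
      simp [flipD, hc] at h
    · exact absurd (if_neg hsupp) hne
  · -- membership
    rintro ⟨c, gs⟩ hp
    exact Finset.mem_product.2 ⟨Finset.mem_univ _,
      swapAt_mem_choices hv (Finset.mem_product.1 hp).2⟩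
  · -- involution
    rintro ⟨c, gs⟩ hp
    have hgs : gs ∈ H.choices (H.W1 ∪ V2) := (Finset.mem_product.1 hp).2
    have hsub : gs v ⊆ H.h v := ((mem_choices_iff.1 hgs) v).1
    simp only [Prod.mk.injEq]
    exact ⟨flipD_flipD, swapAt_swapAt hsub⟩

end Aux6
section Aux7

open LoopedDigraph

variable {V : Type*} [Fintype V] [DecidableEq V]
variable {G : LoopedDigraph V} {V' : Finset V}

lemma exists_nonzero_Bterm {R : Type*} [CommRing R] {H : HData G V'} {lam : R}
    {x : V × V → R} (hA : H.Aval lam x ≠ 0) :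
    ∃ c V2 gs, (∀ u, (c u).isSome = true ↔ u ∈ V') ∧ V2 ⊆ H.W2 \ H.W1 ∧
      gs ∈ H.choices (H.W1 ∪ V2) ∧ H.Bterm lam x c V2 gs ≠ 0 := by
  rw [HData.Aval] at hA
  obtain ⟨c, -, hc⟩ := Finset.exists_ne_zero_of_sum_ne_zero hA
  by_cases hsupp : ∀ u, (c u).isSome = true ↔ u ∈ V'
  · rw [if_pos hsupp] at hc
    obtain ⟨V2, hV2, hc2⟩ := Finset.exists_ne_zero_of_sum_ne_zero hc
    obtain ⟨gs, hgs, hc3⟩ := Finset.exists_ne_zero_of_sum_ne_zero hc2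
    exact ⟨c, V2, gs, hsupp, Finset.mem_powerset.1 hV2, hgs, hc3⟩
  · rw [if_neg hsupp] at hc
    exact absurd rfl hc

lemma sarg_mem_of_Aval_ne_zero {R : Type*} [CommRing R] {H : HData G V'} {lam : R}
    {x : V × V → R} (hA : H.Aval lam x ≠ 0) {p : (V × V) × V} (hp : p ∈ H.hW2) :
    sarg p ∈ V' := by
  obtain ⟨c, V2, gs, hsupp, hV2, hgs, hB⟩ := exists_nonzero_Bterm hA
  by_contra hno
  have hnone : c (sarg p) = none := by
    cases hcs : c (sarg p) with
    | none => rfl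
    | some a => exact absurd ((hsupp (sarg p)).1 (by rw [hcs]; rfl)) hno
  apply hB
  rw [Bterm_eq H lam x c hV2 hgs]
  obtain ⟨hw2, hh⟩ := mem_hW2.1 hp
  have hz : (∏ w ∈ H.W2, ∏ e ∈ H.h w, G.zfun x c (decide (e ∈ gs w)) w e) = 0 :=
    Finset.prod_eq_zero hw2 (Finset.prod_eq_zero hh (zfun_eq_zero x hnone))
  rw [hz, mul_zero]

lemma mcount_eq_zero_of_not_mem {R : Type*} [CommRing R] {H : HData G V'} {lam : R}
    {x : V × V → R} (hA : H.Aval lam x ≠ 0) {v : V} (hv : v ∉ V') : mcount H v = 0 := by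
  unfold mcount
  refine Finset.sum_eq_zero fun w hw => ?_
  rw [Finset.card_eq_zero, Finset.filter_eq_empty_iff]
  intro e he hs
  exact hv (hs ▸ sarg_mem_of_Aval_ne_zero hA (mem_hW2.2 ⟨hw, he⟩))

lemma mcount_pos_of_Aval_ne_zero {R : Type*} [CommRing R] {H : HData G V'} {lam : R}
    {x : V × V → R} (hA : H.Aval lam x ≠ 0) {v : V} (hv : v ∈ V') : 1 ≤ mcount H v := by
  by_contra h
  exact hA (Aval_eq_zero_of_mcount_eq_zero H lam x hv (by omega))

lemma mcount_even_of_Aval_ne_zero {R : Type*} [CommRing R] {H : HData G V'} {lam : R}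
    {x : V × V → R} (hA : H.Aval lam x ≠ 0) {v : V} (hv : v ∈ H.W1) :
    Even (mcount H v) := by
  by_contra h
  exact hA (Aval_eq_zero_of_odd_mcount H lam x hv (Nat.not_even_iff_odd.1 h))

lemma mcount_final {R : Type*} [CommRing R] {H : HData G V'} {lam : R}
    {x : V × V → R} (hA : H.Aval lam x ≠ 0) :
    V' = H.W2 ∧ ∀ v ∈ V', mcount H v = if v ∈ H.W1 then 2 else 1 := by
  have hsum : ∑ v ∈ V', mcount H v = H.W2.card + H.W1.card := by
    rw [Finset.sum_subset (Finset.subset_univ V')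
      (fun v _ hv => mcount_eq_zero_of_not_mem hA hv)]
    exact sum_mcount H
  have hle : ∀ v ∈ V', (if v ∈ H.W1 then 2 else 1) ≤ mcount H v := by
    intro v hv
    by_cases h1 : v ∈ H.W1
    · obtain ⟨k, hk⟩ := mcount_even_of_Aval_ne_zero hA h1
      have := mcount_pos_of_Aval_ne_zero hA hv
      rw [if_pos h1]
      omega
    · rw [if_neg h1]
      exact mcount_pos_of_Aval_ne_zero hA hv
  have hgsum : ∑ v ∈ V', (if v ∈ H.W1 then 2 else 1) = V'.card + H.W1.card := by
    have : ∀ v ∈ V', (if v ∈ H.W1 then 2 else 1) = 1 + (if v ∈ H.W1 then 1 else 0) := by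
      intro v _; split_ifs <;> rfl
    rw [Finset.sum_congr rfl this, Finset.sum_add_distrib]
    simp [Finset.sum_ite_mem,
      Finset.inter_eq_right.2 ((W1_subset_W2 H).trans (W2_subset H))]
  have hcard : V'.card + H.W1.card ≤ H.W2.card + H.W1.card := by
    rw [← hsum, ← hgsum]
    exact Finset.sum_le_sum hle
  have hW2card : V'.card ≤ H.W2.card := by omega
  have hVW2 : H.W2 = V' := Finset.eq_of_subset_of_card_le (W2_subset H) hW2card
  have hsum2 : ∑ v ∈ V', (if v ∈ H.W1 then 2 else 1) = ∑ v ∈ V', mcount H v := by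
    rw [hsum, hgsum, hVW2]
  exact ⟨hVW2.symm, fun v hv =>
    ((Finset.sum_eq_sum_iff_of_le hle).1 hsum2 v hv).symm⟩

end Aux7
/-- **Corollary.** If `A(V′,h) ≠ 0` then (a) every arc of `h(W₂)` has both endpoints in
`W₂`, and (b) the number of arc-ends of `h(W₂)` at any `v ∈ W₂` is `2|h(v)|`; in
particular every vertex of `W₂` has degree `2` or `4` in `h(W₂)`. -/
theorem hW2_structure_of_Aval_ne_zero {V : Type*} [Fintype V] [DecidableEq V]
    (G : LoopedDigraph V) (V' : Finset V) (H : HData G V')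
    (hA : H.Aval (R := MvPolynomial (V × V) (Polynomial ℚ)) (MvPolynomial.C Polynomial.X)
      (fun e => MvPolynomial.X e) ≠ 0) :
    (∀ p ∈ H.hW2, p.1.1 ∈ H.W2 ∧ p.1.2 ∈ H.W2) ∧
    (∀ v ∈ H.W2, endCountAt H.hW2 v = 2 * (H.h v).card ∧
      (endCountAt H.hW2 v = 2 ∨ endCountAt H.hW2 v = 4)) := by
  obtain ⟨hVW2, hmc⟩ := mcount_final hA
  constructor
  · intro p hp
    obtain ⟨hw2, hh⟩ := mem_hW2.1 hp
    have hsarg : sarg p ∈ H.W2 := hVW2 ▸ sarg_mem_of_Aval_ne_zero hA hp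
    rcases H.incident p.2 p.1 hh with h1 | h2
    · refine ⟨h1 ▸ hw2, ?_⟩
      have hs : sarg p = p.1.2 := by simp [sarg, h1]
      exact hs ▸ hsarg
    · by_cases h1 : p.1.1 = p.2
      · exact ⟨h1 ▸ hw2, h2 ▸ hw2⟩
      · have hs : sarg p = p.1.1 := by simp [sarg, h1]
        exact ⟨hs ▸ hsarg, h2 ▸ hw2⟩
  · intro v hv
    have hE := endCountAt_eq H hv
    have hm := hmc v (W2_subset H hv)
    by_cases h1 : v ∈ H.W1
    · rw [hE, hm, if_pos h1, (mem_W1.1 h1).2]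
      exact ⟨rfl, Or.inr rfl⟩
    · rw [hE, hm, if_neg h1, card_h_eq_one hv h1]
      exact ⟨rfl, Or.inl rfl⟩
end

section
/- Let G = (V,A) be a looped digraph, V′ ⊆ V, and h a function as in the definition of A(V′,h). If W₂ ≠ V′, then A(V′,h) = 0. -/
open Finset

variable {V : Type*} [Fintype V] [DecidableEq V]

/-! Each factor `z_v(e)`, `z̄_v(e)` is `s(w)` times a term depending only on `δ_v`, where `w` is
the other end of `e`. Hence in every term of `A(V′,h)` the colour `(δ_u, ε_u)` of `u ∈ V′` enters
only through `(-1)^{ε_u}`, through `s(u)^{m(u)}`, where `m(u)` (`otherEndCount`) counts the arcs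
of `h(W₂)` whose other end is `u`, and through `δ_u` in the factors thickened at `u`. If
`m(u) = 0`, flipping `ε_u` is a sign-reversing involution on the terms. If `m(u)` is odd and
`|h(u)| ≠ 1`, so is flipping `δ_u` while exchanging `g(u)` and `f(u)`, because `z_u` for `δ_u`
is `z̄_u` for `-δ_u`. If an arc of `h(W₂)` ends outside `V′`, every term contains a factor
`s = 0`. Otherwise `Σ_{u ∈ V′} m(u) = Σ_{u ∈ V′} |h(u)|`, and a vertex of one of the first two
kinds must exist: without one, `m(u) ≥ |h(u)|` on `V′`, strictly on the nonempty `V′ ∖ W₂`. -/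

def otherEnd (v : V) (e : V × V) : V := if e.1 = v then e.2 else e.1

namespace LoopedDigraph

variable {R : Type*} [CommRing R] (G : LoopedDigraph V) (x : V × V → R)

lemma zfun_eq_zero_of_otherEnd {c : V → Option (Bool × Bool)} {v : V} {e : V × V}
    (hc : c (otherEnd v e) = none) (b : Bool) : G.zfun x c b v e = 0 := by
  unfold zfun sInt otherEnd at *
  split
  · rfl
  · split_ifs at hc ⊢ <;> simp_all

lemma zfun_update_snd_not {c : V → Option (Bool × Bool)} {u : V} {δ ε : Bool}
    (hc : c u = some (δ, ε)) {v : V} {e : V × V} (he : otherEnd v e ≠ u) (b : Bool) :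
    G.zfun x (Function.update c u (some (δ, !ε))) b v e = G.zfun x c b v e := by
  unfold zfun sInt otherEnd at *
  by_cases hv : v = u
  · subst hv
    split_ifs at he ⊢ <;> simp_all
  · split_ifs at he ⊢ <;> simp_all

lemma zfun_update_fst_not {c : V → Option (Bool × Bool)} {u : V} {δ ε : Bool}
    (hc : c u = some (δ, ε)) (v : V) (e : V × V) (b : Bool) :
    G.zfun x (Function.update c u (some (!δ, ε))) (if v = u then !b else b) v e =
      (if otherEnd v e = u then -1 else 1) * G.zfun x c b v e := by
  unfold zfun sInt otherEnd
  by_cases hv : v = u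
  · subst hv
    split_ifs <;> cases δ <;> cases ε <;> cases b <;> simp_all
  · rcases hcv : c v with _ | ⟨δ', ε'⟩
    · simp [hv, hcv]
    · split_ifs <;> cases δ <;> cases ε <;> simp_all

end LoopedDigraph

def epsCount {α : Type*} (V' : Finset α) (c : α → Option (Bool × Bool)) : ℕ :=
  ∑ v ∈ V', ((c v).elim 0 fun p => if p.2 then 1 else 0 : ℕ)

lemma epsCount_update_fst_not {α : Type*} [DecidableEq α] {V' : Finset α}
    {c : α → Option (Bool × Bool)} {u : α} {δ ε : Bool} (hc : c u = some (δ, ε)) :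
    epsCount V' (Function.update c u (some (!δ, ε))) = epsCount V' c := by
  refine sum_congr rfl fun v _ => ?_
  by_cases hvu : v = u
  · subst hvu; simp [hc]
  · simp [hvu]

lemma neg_one_pow_epsCount_update_snd_not {R α : Type*} [CommRing R] [DecidableEq α]
    {V' : Finset α} {c : α → Option (Bool × Bool)} {u : α}
    (hu : u ∈ V') {δ ε : Bool} (hc : c u = some (δ, ε)) :
    (-1 : R) ^ epsCount V' (Function.update c u (some (δ, !ε))) =
      -(-1) ^ epsCount V' c := by
  have hrest : ∑ v ∈ V'.erase u,
      ((Function.update c u (some (δ, !ε)) v).elim 0 fun p => if p.2 then 1 else 0 : ℕ) =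
      ∑ v ∈ V'.erase u, ((c v).elim 0 fun p => if p.2 then 1 else 0 : ℕ) :=
    sum_congr rfl fun v hv => by rw [Function.update_of_ne (ne_of_mem_erase hv)]
  simp only [epsCount, ← add_sum_erase _ _ hu, hrest, Function.update_self, hc, pow_add]
  cases ε <;> simp

namespace HData

variable {G : LoopedDigraph V} {V' : Finset V} (H : HData G V')

lemma h_eq_empty_of_notMem_W2 {v : V} (hv : v ∉ H.W2) : H.h v = ∅ := by
  by_cases hv' : v ∈ V'
  · simpa [W2, hv'] using hv
  · exact H.outside v hv'

lemma card_h_eq_one {v : V} (hv : v ∈ H.W2 \ H.W1) : (H.h v).card = 1 := by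
  simp only [W1, W2, mem_sdiff, mem_filter, not_and] at hv
  have := H.card_le v
  have := hv.2 hv.1.1
  omega

lemma mem_choices {S : Finset V} {gs : V → Finset (V × V)} :
    gs ∈ H.choices S ↔
      ∀ v, gs v ⊆ H.h v ∧ (v ∈ S → (gs v).card = 1) ∧ (v ∉ S → gs v = ∅) := by
  simp [choices]

def swapAt (u : V) (gs : V → Finset (V × V)) : V → Finset (V × V) :=
  Function.update gs u (H.h u \ gs u)

lemma swapAt_mem_choices {S : Finset V} {gs : V → Finset (V × V)} (hgs : gs ∈ H.choices S)
    {u : V} (hcard : (H.h u).card ≠ 1) (hS : (H.h u).card = 2 → u ∈ S) :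
    H.swapAt u gs ∈ H.choices S := by
  rw [mem_choices] at hgs ⊢
  intro v
  by_cases hvu : v = u
  · subst hvu
    obtain ⟨hsub, hin, hout⟩ := hgs v
    have hle := H.card_le v
    have hcard_sdiff := card_sdiff_of_subset hsub
    have hgs_le := card_le_card hsub
    refine ⟨by simp [swapAt], fun hv => ?_, fun hv => ?_⟩ <;>
      simp only [swapAt, Function.update_self]
    · have := hin hv
      omega
    · rw [hout hv, sdiff_empty, ← card_eq_zero]
      have := mt hS hv
      omega
  · simpa [swapAt, hvu] using hgs v

lemma swapAt_swapAt {gs : V → Finset (V × V)} {u : V} (hgs : gs u ⊆ H.h u) :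
    H.swapAt u (H.swapAt u gs) = gs := by
  simp [swapAt, Finset.sdiff_sdiff_eq_self hgs]

lemma sum_choices_swapAt {M : Type*} [AddCommMonoid M] {S : Finset V} {u : V}
    (hcard : (H.h u).card ≠ 1) (hS : (H.h u).card = 2 → u ∈ S)
    (f : (V → Finset (V × V)) → M) :
    ∑ gs ∈ H.choices S, f (H.swapAt u gs) = ∑ gs ∈ H.choices S, f gs := by
  refine sum_nbij' (H.swapAt u) (H.swapAt u)
    (fun gs hgs => H.swapAt_mem_choices hgs hcard hS)
    (fun gs hgs => H.swapAt_mem_choices hgs hcard hS)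
    (fun gs hgs => H.swapAt_swapAt ((H.mem_choices.mp hgs) u).1)
    (fun gs hgs => H.swapAt_swapAt ((H.mem_choices.mp hgs) u).1) fun gs _ => rfl

def otherEndCount (u : V) : ℕ := ∑ v, ∑ e ∈ H.h v, if otherEnd v e = u then 1 else 0

lemma sum_otherEndCount : ∑ u, H.otherEndCount u = ∑ v, (H.h v).card := by
  simp only [otherEndCount]
  rw [sum_comm]
  refine sum_congr rfl fun v _ => ?_
  rw [sum_comm, card_eq_sum_ones]
  exact sum_congr rfl fun e _ => by simp

lemma otherEnd_ne_of_otherEndCount_eq_zero {u : V} (hM : H.otherEndCount u = 0) {v : V}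
    {e : V × V} (he : e ∈ H.h v) : otherEnd v e ≠ u := by
  intro h
  have := (sum_eq_zero_iff.mp ((sum_eq_zero_iff.mp hM) v (mem_univ v))) e he
  simp [h] at this

lemma exists_vanishing_vertex (hne : H.W2 ≠ V') (hin : ∀ v, ∀ e ∈ H.h v, otherEnd v e ∈ V') :
    ∃ u ∈ V', H.otherEndCount u = 0 ∨ (Odd (H.otherEndCount u) ∧ (H.h u).card ≠ 1) := by
  by_contra! hgood
  obtain ⟨u₀, hu₀, hcard₀⟩ : ∃ u ∈ V', (H.h u).card = 0 := by
    by_contra! hpos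
    exact hne (filter_eq_self.mpr fun u hu => Nat.one_le_iff_ne_zero.mpr (hpos u hu))
  have hle : ∀ u ∈ V', (H.h u).card ≤ H.otherEndCount u := by
    intro u hu
    have := H.card_le u
    rcases Nat.even_or_odd (H.otherEndCount u) with ⟨k, hk⟩ | hodd
    · have := (hgood u hu).1
      omega
    · have := (hgood u hu).2 hodd
      have := (hgood u hu).1
      omega
  have hlt : ∑ u ∈ V', (H.h u).card < ∑ u ∈ V', H.otherEndCount u :=
    sum_lt_sum hle ⟨u₀, hu₀, by rw [hcard₀]; exact Nat.pos_of_ne_zero (hgood u₀ hu₀).1⟩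
  have hcount_out : ∀ u ∉ V', H.otherEndCount u = 0 := fun u hu =>
    sum_eq_zero fun v _ => sum_eq_zero fun e he =>
      if_neg fun h : otherEnd v e = u => hu (h ▸ hin v e he)
  have hsum : ∑ u ∈ V', H.otherEndCount u = ∑ u ∈ V', (H.h u).card := by
    rw [sum_subset (subset_univ V') fun u _ hu => hcount_out u hu, sum_otherEndCount,
      sum_subset (subset_univ V') fun v _ hv => by rw [H.outside v hv, card_empty]]
  omega

variable {R : Type*} [CommRing R] (lam : R) (x : V × V → R)

def zprod (c : V → Option (Bool × Bool)) (gs : V → Finset (V × V)) : R :=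
  ∏ v, ∏ e ∈ H.h v, G.zfun x c (decide (e ∈ gs v)) v e

lemma zprod_eq {c : V → Option (Bool × Bool)} {V2 : Finset V} (hV2 : V2 ⊆ H.W2 \ H.W1)
    {gs : V → Finset (V × V)} (hgs : gs ∈ H.choices (H.W1 ∪ V2)) :
    H.zprod x c gs =
      (∏ v ∈ H.W1 ∪ V2, ∏ e ∈ gs v, G.zfun x c true v e) *
        ∏ v ∈ H.W1 ∪ (H.W2 \ (H.W1 ∪ V2)), ∏ e ∈ H.h v \ gs v, G.zfun x c false v e := by
  rw [mem_choices] at hgs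
  have hsplit : ∀ v, ∏ e ∈ H.h v, G.zfun x c (decide (e ∈ gs v)) v e =
      (∏ e ∈ gs v, G.zfun x c true v e) * ∏ e ∈ H.h v \ gs v, G.zfun x c false v e := by
    intro v
    rw [← prod_sdiff (hgs v).1, mul_comm]
    congr 1
    · exact prod_congr rfl fun e he => by simp [he]
    · exact prod_congr rfl fun e he => by simp [(mem_sdiff.mp he).2]
  have hg : ∏ v, ∏ e ∈ gs v, G.zfun x c true v e =
      ∏ v ∈ H.W1 ∪ V2, ∏ e ∈ gs v, G.zfun x c true v e :=
    (prod_subset (subset_univ _) fun v _ hv => by rw [(hgs v).2.2 hv, prod_empty]).symm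
  have hf : ∏ v, ∏ e ∈ H.h v \ gs v, G.zfun x c false v e =
      ∏ v ∈ H.W1 ∪ (H.W2 \ (H.W1 ∪ V2)), ∏ e ∈ H.h v \ gs v, G.zfun x c false v e := by
    refine (prod_subset (subset_univ _) fun v _ hv => ?_).symm
    suffices H.h v \ gs v = ∅ by rw [this, prod_empty]
    simp only [mem_union, mem_sdiff, not_or, not_and, not_not] at hv
    by_cases hv2 : v ∈ H.W2
    · have hvV2 : v ∈ V2 := hv.2 hv2 hv.1
      have hcard := H.card_h_eq_one (hV2 hvV2)
      rw [sdiff_eq_empty_iff_subset]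
      exact (eq_of_subset_of_card_le (hgs v).1
        (by rw [hcard, (hgs v).2.1 (mem_union_right _ hvV2)])).symm.subset
    · rw [H.h_eq_empty_of_notMem_W2 hv2, empty_sdiff]
  simp only [zprod, hsplit, prod_mul_distrib, hg, hf]

lemma zprod_update_snd_not {c : V → Option (Bool × Bool)} {u : V} {δ ε : Bool}
    (hc : c u = some (δ, ε)) (hM : H.otherEndCount u = 0) (gs : V → Finset (V × V)) :
    H.zprod x (Function.update c u (some (δ, !ε))) gs = H.zprod x c gs :=
  prod_congr rfl fun _ _ => prod_congr rfl fun _ he =>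
    G.zfun_update_snd_not x hc (H.otherEnd_ne_of_otherEndCount_eq_zero hM he) _

lemma zprod_update_fst_not_swapAt {c : V → Option (Bool × Bool)} {u : V} {δ ε : Bool}
    (hc : c u = some (δ, ε)) (gs : V → Finset (V × V)) :
    H.zprod x (Function.update c u (some (!δ, ε))) (H.swapAt u gs) =
      (-1) ^ H.otherEndCount u * H.zprod x c gs := by
  have hfactor : ∀ v, ∀ e ∈ H.h v,
      G.zfun x (Function.update c u (some (!δ, ε))) (decide (e ∈ H.swapAt u gs v)) v e =
        (-1 : R) ^ (if otherEnd v e = u then 1 else 0) * G.zfun x c (decide (e ∈ gs v)) v e := by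
    intro v e he
    have hdec : decide (e ∈ H.swapAt u gs v) =
        if v = u then !decide (e ∈ gs v) else decide (e ∈ gs v) := by
      by_cases hvu : v = u
      · subst hvu; simp [swapAt, he]
      · simp [swapAt, hvu]
    rw [hdec, G.zfun_update_fst_not x hc]
    split_ifs <;> simp
  simp only [zprod, otherEndCount, prod_congr rfl fun v _ => prod_congr rfl (hfactor v),
    prod_mul_distrib, prod_pow_eq_pow_sum]

lemma zprod_eq_zero_of_otherEnd_notMem {c : V → Option (Bool × Bool)}
    (hc : ∀ v, (c v).isSome = true ↔ v ∈ V') {v : V} {e : V × V} (he : e ∈ H.h v)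
    (hout : otherEnd v e ∉ V') (gs : V → Finset (V × V)) : H.zprod x c gs = 0 := by
  refine prod_eq_zero (mem_univ v) (prod_eq_zero he (G.zfun_eq_zero_of_otherEnd x ?_ _))
  simpa [← hc] using hout

noncomputable def Bsum (c : V → Option (Bool × Bool)) : R :=
  ∑ V2 ∈ (H.W2 \ H.W1).powerset, ∑ gs ∈ H.choices (H.W1 ∪ V2), H.Bterm lam x c V2 gs

lemma Bsum_eq (c : V → Option (Bool × Bool)) :
    H.Bsum lam x c = (-1) ^ epsCount V' c * ∑ V2 ∈ (H.W2 \ H.W1).powerset,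
        (-1) ^ (H.W1 ∪ V2).card * (lam + 1) ^ (V' \ (H.W1 ∪ V2)).card *
          ∑ gs ∈ H.choices (H.W1 ∪ V2), H.zprod x c gs := by
  simp only [Bsum, mul_sum]
  refine sum_congr rfl fun V2 hV2 => sum_congr rfl fun gs hgs => ?_
  rw [H.zprod_eq x (mem_powerset.mp hV2) hgs, Bterm, epsCount]
  ring

lemma Aval_eq_zero_of_Bsum_update_eq_neg {u : V} (hu : u ∈ V')
    (φ : Bool × Bool → Bool × Bool) (hφ : Function.Involutive φ) (hfix : ∀ s, φ s ≠ s)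
    (hanti : ∀ c s, c u = some s →
      H.Bsum lam x (Function.update c u (some (φ s))) = -H.Bsum lam x c) :
    H.Aval lam x = 0 := by
  unfold Aval
  rw [← sum_filter]
  have hcu : ∀ c ∈ univ.filter (fun c : V → Option (Bool × Bool) =>
      ∀ v, (c v).isSome = true ↔ v ∈ V'), ∃ s, c u = some s := fun c hc =>
    Option.isSome_iff_exists.mp (((mem_filter.mp hc).2 u).mpr hu)
  refine sum_involution (fun c _ => Function.update c u ((c u).map φ)) ?_ ?_ ?_ ?_
  · intro c hc
    obtain ⟨s, hs⟩ := hcu c hc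
    rw [hs, Option.map_some]
    exact add_eq_zero_iff_eq_neg'.mpr (hanti c s hs)
  · intro c hc _ h
    obtain ⟨s, hs⟩ := hcu c hc
    have := congrFun h u
    simp [hs, hfix] at this
  · intro c hc
    simp only [mem_filter, mem_univ, true_and] at hc ⊢
    intro v
    by_cases hvu : v = u
    · subst hvu; simpa using hc v
    · simpa [hvu] using hc v
  · intro c _
    simp [Option.map_map, hφ.comp_self]

lemma Bsum_update_snd_not {c : V → Option (Bool × Bool)} {u : V} (hu : u ∈ V')
    (hM : H.otherEndCount u = 0) {δ ε : Bool} (hc : c u = some (δ, ε)) :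
    H.Bsum lam x (Function.update c u (some (δ, !ε))) = -H.Bsum lam x c := by
  simp only [Bsum_eq, neg_one_pow_epsCount_update_snd_not hu hc,
    H.zprod_update_snd_not x hc hM, neg_mul]

lemma Bsum_update_fst_not {c : V → Option (Bool × Bool)} {u : V} (hu : u ∈ V')
    (hodd : Odd (H.otherEndCount u)) (hcard : (H.h u).card ≠ 1) {δ ε : Bool}
    (hc : c u = some (δ, ε)) :
    H.Bsum lam x (Function.update c u (some (!δ, ε))) = -H.Bsum lam x c := by
  have hW1 : (H.h u).card = 2 → u ∈ H.W1 := fun h2 => mem_filter.mpr ⟨hu, h2⟩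
  have hswap : ∀ V2 : Finset V,
      ∑ gs ∈ H.choices (H.W1 ∪ V2), H.zprod x (Function.update c u (some (!δ, ε))) gs =
        -∑ gs ∈ H.choices (H.W1 ∪ V2), H.zprod x c gs := by
    intro V2
    rw [← H.sum_choices_swapAt hcard (fun h2 => mem_union_left _ (hW1 h2))]
    simp only [H.zprod_update_fst_not_swapAt x hc, hodd.neg_one_pow, neg_one_mul,
      sum_neg_distrib]
  simp only [Bsum_eq, epsCount_update_fst_not hc, hswap, mul_neg, sum_neg_distrib]

lemma Aval_eq_zero_of_otherEndCount_eq_zero {u : V} (hu : u ∈ V')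
    (hM : H.otherEndCount u = 0) : H.Aval lam x = 0 :=
  H.Aval_eq_zero_of_Bsum_update_eq_neg lam x hu (fun s => (s.1, !s.2))
    (fun s => by simp) (fun s => by simp [Prod.ext_iff])
    fun _ _ hc => H.Bsum_update_snd_not lam x hu hM hc

lemma Aval_eq_zero_of_otherEndCount_odd {u : V} (hu : u ∈ V')
    (hodd : Odd (H.otherEndCount u)) (hcard : (H.h u).card ≠ 1) : H.Aval lam x = 0 :=
  H.Aval_eq_zero_of_Bsum_update_eq_neg lam x hu (fun s => (!s.1, s.2))
    (fun s => by simp) (fun s => by simp [Prod.ext_iff])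
    fun _ _ hc => H.Bsum_update_fst_not lam x hu hodd hcard hc

lemma Aval_eq_zero_of_otherEnd_notMem {v : V} {e : V × V} (he : e ∈ H.h v)
    (hout : otherEnd v e ∉ V') : H.Aval lam x = 0 := by
  refine sum_eq_zero fun c _ => ?_
  split_ifs with hc
  · change H.Bsum lam x c = 0
    simp [Bsum_eq, H.zprod_eq_zero_of_otherEnd_notMem x hc he hout]
  · rfl

end HData

/-- **Corollary.** If `W₂ ≠ V′` then `A(V′,h) = 0`. -/
theorem Aval_eq_zero_of_W2_ne {V : Type*} [Fintype V] [DecidableEq V]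
    (G : LoopedDigraph V) (V' : Finset V) (H : HData G V')
    (hne : H.W2 ≠ V') :
    H.Aval (R := MvPolynomial (V × V) (Polynomial ℚ)) (MvPolynomial.C Polynomial.X)
      (fun e => MvPolynomial.X e) = 0 := by
  by_cases hout : ∃ v, ∃ e ∈ H.h v, otherEnd v e ∉ V'
  · obtain ⟨v, e, he, hout⟩ := hout
    exact H.Aval_eq_zero_of_otherEnd_notMem _ _ he hout
  push Not at hout
  obtain ⟨u, hu, hM | ⟨hodd, hcard⟩⟩ := H.exists_vanishing_vertex hne hout
  · exact H.Aval_eq_zero_of_otherEndCount_eq_zero _ _ hu hM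
  · exact H.Aval_eq_zero_of_otherEndCount_odd _ _ hu hodd hcard
end

section
/- Let G = (V,A) be a looped digraph, V′ ⊆ V, and K a collection of thickened arcs good on V′ with degree-4 vertex set W₁. Then C(X,V′,K) = C(Y,V′,K) for all subsets X, Y of V′∖W₁. -/
open Finset

variable {V : Type*} [Fintype V] [DecidableEq V]

/-! ### Auxiliary material for the proof -/

section AuxCval

open LoopedDigraph

variable {V : Type*} [Fintype V] [DecidableEq V]

/-- Flip the `δ`-component of a partial coloring at `v₀`. -/
private def flipAt (v₀ : V) (c : V → Option (Bool × Bool)) : V → Option (Bool × Bool) :=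
  Function.update c v₀ ((c v₀).map fun p => (!p.1, p.2))

private lemma flipAt_apply_self (v₀ : V) (c : V → Option (Bool × Bool)) :
    flipAt v₀ c v₀ = (c v₀).map fun p => (!p.1, p.2) :=
  Function.update_self _ _ _

private lemma flipAt_apply_ne (v₀ : V) (c : V → Option (Bool × Bool)) {w : V} (h : w ≠ v₀) :
    flipAt v₀ c w = c w :=
  Function.update_of_ne h _ _

private lemma flipAt_involutive (v₀ : V) :
    Function.Involutive (flipAt (V := V) v₀) := by
  intro c; funext w
  by_cases h : w = v₀
  · subst h
    rw [flipAt_apply_self, flipAt_apply_self]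
    rcases c w with _ | ⟨δ, ε⟩ <;> simp
  · rw [flipAt_apply_ne _ _ h, flipAt_apply_ne _ _ h]

private lemma flipAt_isSome (v₀ : V) (c : V → Option (Bool × Bool)) (w : V) :
    ((flipAt v₀ c) w).isSome = (c w).isSome := by
  by_cases h : w = v₀
  · subst h; rw [flipAt_apply_self]; rcases c w with _ | p <;> rfl
  · rw [flipAt_apply_ne _ _ h]

private lemma sInt_congr {c c' : V → Option (Bool × Bool)} {w : V} (h : c w = c' w) :
    LoopedDigraph.sInt c w = LoopedDigraph.sInt c' w := by
  unfold LoopedDigraph.sInt; rw [h]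

private lemma sInt_flipAt (v₀ : V) (c : V → Option (Bool × Bool)) (w : V) :
    LoopedDigraph.sInt (flipAt v₀ c) w
      = (if w = v₀ then -1 else 1) * LoopedDigraph.sInt c w := by
  by_cases h : w = v₀
  · subst h
    rw [if_pos rfl]
    unfold LoopedDigraph.sInt
    rw [flipAt_apply_self]
    rcases c w with _ | ⟨δ, ε⟩
    · simp
    · cases δ <;> cases ε <;> simp
  · rw [if_neg h, one_mul]
    exact sInt_congr (flipAt_apply_ne _ _ h)

private lemma zfun_flipAt_ne (G : LoopedDigraph V) {R : Type*} [CommRing R] (x : V × V → R)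
    (c : V → Option (Bool × Bool)) (bar : Bool) {w v₀ : V} (hw : w ≠ v₀) (e : V × V) :
    G.zfun x (flipAt v₀ c) bar w e
      = (if (if e.1 = w then e.2 else e.1) = v₀ then (-1 : R) else 1) * G.zfun x c bar w e := by
  have hs : ∀ u : V, ((LoopedDigraph.sInt (flipAt v₀ c) u : ℤ) : R)
      = (if u = v₀ then (-1 : R) else 1) * ((LoopedDigraph.sInt c u : ℤ) : R) := by
    intro u; rw [sInt_flipAt]; split_ifs <;> push_cast <;> ring
  unfold LoopedDigraph.zfun
  rw [flipAt_apply_ne _ _ hw]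
  rcases c w with _ | ⟨δ, ε⟩
  · simp
  · dsimp only
    by_cases hred : e ∈ G.red
    · rw [if_pos hred, if_pos hred]
      by_cases h1 : e.1 = w
      · rw [if_pos h1, if_pos h1, if_pos h1, hs]; ring
      · rw [if_neg h1, if_neg h1, if_neg h1, mul_zero]
    · rw [if_neg hred, if_neg hred]
      by_cases h1 : e.1 = w
      · rw [if_pos h1, if_pos h1, if_pos h1]
        by_cases hd : δ = bar
        · simp only [if_pos hd, hs]; ring
        · simp only [if_neg hd, mul_zero]
      · rw [if_neg h1, if_neg h1, if_neg h1]
        by_cases h2 : e.2 = w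
        · rw [if_pos h2, if_pos h2]
          by_cases hd : δ ≠ bar
          · simp only [if_pos hd, hs]; ring
          · simp only [if_neg hd, mul_zero]
        · rw [if_neg h2, if_neg h2, mul_zero]

private lemma zfun_flipAt_self_nonloop (G : LoopedDigraph V) {R : Type*} [CommRing R]
    (x : V × V → R) (c : V → Option (Bool × Bool)) {v₀ : V} {e : V × V} (hne : e.1 ≠ e.2) :
    G.zfun x (flipAt v₀ c) false v₀ e = G.zfun x c true v₀ e := by
  have hs : ∀ u : V, u ≠ v₀ → LoopedDigraph.sInt (flipAt v₀ c) u = LoopedDigraph.sInt c u := by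
    intro u hu; exact sInt_congr (flipAt_apply_ne _ _ hu)
  unfold LoopedDigraph.zfun
  rw [flipAt_apply_self]
  rcases c v₀ with _ | ⟨δ, ε⟩
  · simp
  · simp only [Option.map_some]
    by_cases hred : e ∈ G.red
    · rw [if_pos hred, if_pos hred]
      by_cases h1 : e.1 = v₀
      · rw [if_pos h1, if_pos h1, hs e.2 (fun h => hne (h1.trans h.symm))]
      · rw [if_neg h1, if_neg h1]
    · rw [if_neg hred, if_neg hred]
      by_cases h1 : e.1 = v₀
      · rw [if_pos h1, if_pos h1, hs e.2 (fun h => hne (h1.trans h.symm))]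
        cases δ <;> simp
      · rw [if_neg h1, if_neg h1]
        by_cases h2 : e.2 = v₀
        · rw [if_pos h2, if_pos h2, hs e.1 (fun h => hne (h.trans h2.symm))]
          cases δ <;> simp
        · rw [if_neg h2, if_neg h2]

private lemma zfun_flipAt_self_loop (G : LoopedDigraph V) {R : Type*} [CommRing R]
    (x : V × V → R) (c : V → Option (Bool × Bool)) (v₀ : V) (hred : (v₀, v₀) ∉ G.red) :
    G.zfun x (flipAt v₀ c) false v₀ (v₀, v₀) = - G.zfun x c true v₀ (v₀, v₀) := by
  unfold LoopedDigraph.zfun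
  rw [flipAt_apply_self]
  rcases c v₀ with _ | ⟨δ, ε⟩
  · simp
  · have hs : ((LoopedDigraph.sInt (flipAt v₀ c) v₀ : ℤ) : R)
        = -((LoopedDigraph.sInt c v₀ : ℤ) : R) := by
      rw [sInt_flipAt, if_pos rfl]; push_cast; ring
    simp only [Option.map_some, if_neg hred]
    cases δ <;> simp [hs]

private lemma tvert_or (G : LoopedDigraph V) (t : TArc V) :
    G.tvert t = t.1.1 ∨ G.tvert t = t.1.2 := by
  unfold LoopedDigraph.tvert; split_ifs <;> simp

private lemma mem_thickedAt {G : LoopedDigraph V} {K : Finset (TArc V)} {v : V} {t : TArc V} :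
    t ∈ G.thickedAt K v ↔ t ∈ K ∧ G.tvert t = v := by
  unfold LoopedDigraph.thickedAt; exact mem_filter

/-- The sign picked up by the factor at `w` for the arc `e` when flipping at `v₀`. -/
private def sgn {R : Type*} [CommRing R] (v₀ w : V) (e : V × V) : R :=
  if (if e.1 = w then e.2 else e.1) = v₀ then -1 else 1

private lemma zfun_flipAt_ne' (G : LoopedDigraph V) {R : Type*} [CommRing R] (x : V × V → R)
    (c : V → Option (Bool × Bool)) (bar : Bool) {w v₀ : V} (hw : w ≠ v₀) (e : V × V) :
    G.zfun x (flipAt v₀ c) bar w e = sgn v₀ w e * G.zfun x c bar w e :=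
  zfun_flipAt_ne G x c bar hw e

private lemma assemble {R : Type*} [CommRing R] (z A B SA SB εz εs : R)
    (hE : SA * SB = εs) (hsign : εz * εs = -1) :
    z * A * B = -(SA * A * (εz * z * (SB * B))) := by
  subst hE; linear_combination (z * A * B) * hsign

private lemma Cval_insert (G : LoopedDigraph V) (V' : Finset V) (K : Finset (TArc V))
    (hK : G.IsGood V' K) {R : Type*} [CommRing R] (x : V × V → R)
    (X : Finset V) (v₀ : V) (hv₀X : v₀ ∉ X)
    (hins : insert v₀ X ⊆ V' \ KW1 G K) :
    G.Cval V' K (insert v₀ X) x = G.Cval V' K X x := by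
  classical
  have hv₀ := hins (mem_insert_self v₀ X)
  rw [mem_sdiff] at hv₀
  obtain ⟨hv₀V', hv₀W⟩ := hv₀
  have hXsub : ∀ v ∈ X, v ∈ V' ∧ v ∉ KW1 G K := by
    intro v hv; have := hins (mem_insert_of_mem hv); rwa [mem_sdiff] at this
  have hW1V' : ∀ v ∈ KW1 G K, v ∈ V' := by
    intro v hv
    rw [KW1, mem_filter] at hv
    by_contra h
    rw [hK.deg_out v h] at hv
    exact absurd hv.2 (by norm_num)
  -- `v₀` has degree 2 and a unique thickened arc `t₀`
  have hdeg2 : degAt K v₀ = 2 := by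
    rcases hK.deg_mem v₀ hv₀V' with h | h
    · exact h
    · have : v₀ ∈ KW1 G K := by
        unfold LoopedDigraph.KW1; exact mem_filter.mpr ⟨mem_univ _, h⟩
      exact absurd this hv₀W
  have hth1 : (G.thickedAt K v₀).card = 1 := by
    have h := hK.half_thick v₀
    rw [hdeg2] at h
    have h1 : G.thickAt K v₀ = 1 := by omega
    unfold LoopedDigraph.thickAt at h1
    unfold LoopedDigraph.thickedAt
    exact h1
  obtain ⟨t₀, ht₀⟩ := card_eq_one.mp hth1
  have ht₀mem : t₀ ∈ G.thickedAt K v₀ := ht₀ ▸ mem_singleton_self t₀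
  have ht₀K : t₀ ∈ K := (mem_thickedAt.mp ht₀mem).1
  have ht₀v : G.tvert t₀ = v₀ := (mem_thickedAt.mp ht₀mem).2
  have hQt₀ : ∀ t ∈ K, t ≠ t₀ → G.tvert t ≠ v₀ := by
    intro t ht hne h
    have : t ∈ G.thickedAt K v₀ := mem_thickedAt.mpr ⟨ht, h⟩
    rw [ht₀, mem_singleton] at this
    exact hne this
  have htvV' : ∀ t ∈ K, G.tvert t ∈ V' := by
    intro t ht
    by_contra h
    have h0 := hK.deg_out _ h
    have h2 := hK.half_thick (G.tvert t)
    rw [h0] at h2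
    have h3 : G.thickAt K (G.tvert t) = 0 := by omega
    unfold LoopedDigraph.thickAt at h3
    have h4 := card_eq_zero.mp h3
    have h5 : t ∈ K.filter (fun s => G.tvert s = G.tvert t) := mem_filter.mpr ⟨ht, rfl⟩
    rw [h4] at h5
    exact absurd h5 (notMem_empty t)
  -- the basic counting fact
  have hcard : (K.filter (fun t => G.tvert t ≠ v₀ ∧
        (if t.1.1 = G.tvert t then t.1.2 else t.1.1) = v₀)).card
      = if t₀.1.1 = t₀.1.2 then 0 else 1 := by
    have hsum2 : ∑ t ∈ K, ((if t.1.1 = v₀ then (1:ℕ) else 0) + (if t.1.2 = v₀ then 1 else 0))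
        = 2 := by unfold degAt at hdeg2; exact hdeg2
    have h3 : (∑ t ∈ K.erase t₀,
          ((if t.1.1 = v₀ then (1:ℕ) else 0) + (if t.1.2 = v₀ then 1 else 0)))
        + ((if t₀.1.1 = v₀ then (1:ℕ) else 0) + (if t₀.1.2 = v₀ then 1 else 0))
        = ∑ t ∈ K, ((if t.1.1 = v₀ then (1:ℕ) else 0) + (if t.1.2 = v₀ then 1 else 0)) :=
      Finset.sum_erase_add K _ ht₀K
    by_cases hloop : t₀.1.1 = t₀.1.2
    · -- `t₀` is a loop at `v₀` : no other arc touches `v₀`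
      have h11 : t₀.1.1 = v₀ := by
        rcases tvert_or G t₀ with h | h
        · exact h.symm.trans ht₀v
        · exact hloop.trans (h.symm.trans ht₀v)
      have h12 : t₀.1.2 = v₀ := hloop ▸ h11
      have h4 : (if t₀.1.1 = v₀ then (1:ℕ) else 0) + (if t₀.1.2 = v₀ then 1 else 0) = 2 := by
        rw [if_pos h11, if_pos h12]
      have hz : ∑ t ∈ K.erase t₀,
          ((if t.1.1 = v₀ then (1:ℕ) else 0) + (if t.1.2 = v₀ then 1 else 0)) = 0 := by omega
      have hends0 := (Finset.sum_eq_zero_iff).mp hz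
      rw [if_pos hloop, card_eq_zero, filter_eq_empty_iff]
      intro t ht hp
      obtain ⟨hnv, href⟩ := hp
      have htne : t ≠ t₀ := fun h => hnv (by rw [h, ht₀v])
      have h0 := hends0 t (mem_erase.mpr ⟨htne, ht⟩)
      by_cases hc : t.1.1 = G.tvert t
      · rw [if_pos hc] at href
        rw [if_pos href] at h0
        omega
      · rw [if_neg hc] at href
        rw [if_pos href] at h0
        omega
    · -- `t₀` is not a loop : exactly one other arc-end at `v₀`
      have hep : (if t₀.1.1 = v₀ then (1:ℕ) else 0) + (if t₀.1.2 = v₀ then 1 else 0) = 1 := by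
        rcases tvert_or G t₀ with h | h
        · have h1 : t₀.1.1 = v₀ := h.symm.trans ht₀v
          have h2 : t₀.1.2 ≠ v₀ := fun hh => hloop (h1.trans hh.symm)
          rw [if_pos h1, if_neg h2]
        · have h2 : t₀.1.2 = v₀ := h.symm.trans ht₀v
          have h1 : t₀.1.1 ≠ v₀ := fun hh => hloop (hh.trans h2.symm)
          rw [if_neg h1, if_pos h2]
      have hnotboth : ∀ t ∈ K.erase t₀, ¬(t.1.1 = v₀ ∧ t.1.2 = v₀) := by
        rintro t ht ⟨h1, h2⟩
        have htv : G.tvert t = v₀ := by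
          unfold LoopedDigraph.tvert; split_ifs <;> assumption
        exact hQt₀ t (mem_of_mem_erase ht) (ne_of_mem_erase ht) htv
      have hset : K.filter (fun t => G.tvert t ≠ v₀ ∧
            (if t.1.1 = G.tvert t then t.1.2 else t.1.1) = v₀)
          = (K.erase t₀).filter (fun t =>
              ((if t.1.1 = v₀ then (1:ℕ) else 0) + (if t.1.2 = v₀ then 1 else 0)) = 1) := by
        ext t
        simp only [mem_filter, mem_erase]
        constructor
        · rintro ⟨ht, hnv, href⟩
          have htne : t ≠ t₀ := fun h => hnv (by rw [h, ht₀v])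
          refine ⟨⟨htne, ht⟩, ?_⟩
          by_cases hc : t.1.1 = G.tvert t
          · rw [if_pos hc] at href
            rw [if_neg (fun h => hnv (hc.symm.trans h)), if_pos href]
          · rw [if_neg hc] at href
            have h2 : G.tvert t = t.1.2 := (tvert_or G t).resolve_left (fun h => hc h.symm)
            rw [if_pos href, if_neg (fun h => hnv (h2.trans h))]
        · rintro ⟨⟨hne, htK⟩, hend⟩
          have hnv : G.tvert t ≠ v₀ := hQt₀ t htK hne
          refine ⟨htK, hnv, ?_⟩
          by_cases hc : t.1.1 = G.tvert t
          · rw [if_pos hc]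
            rw [if_neg (fun h => hnv (hc.symm.trans h))] at hend
            by_cases h2 : t.1.2 = v₀
            · exact h2
            · rw [if_neg h2] at hend; omega
          · rw [if_neg hc]
            have h2 : G.tvert t = t.1.2 := (tvert_or G t).resolve_left (fun h => hc h.symm)
            rw [if_neg (fun h => hnv (h2.trans h))] at hend
            by_cases h1 : t.1.1 = v₀
            · exact h1
            · rw [if_neg h1] at hend; omega
      rw [if_neg hloop, hset, card_filter]
      have hpt : ∀ t ∈ K.erase t₀,
          (if ((if t.1.1 = v₀ then (1:ℕ) else 0) + (if t.1.2 = v₀ then 1 else 0)) = 1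
            then (1:ℕ) else 0)
          = ((if t.1.1 = v₀ then (1:ℕ) else 0) + (if t.1.2 = v₀ then 1 else 0)) := by
        intro t ht
        have hb := hnotboth t ht
        by_cases h1 : t.1.1 = v₀ <;> by_cases h2 : t.1.2 = v₀ <;> simp [h1, h2] at hb ⊢
      rw [Finset.sum_congr rfl hpt]
      omega
  -- now the state-sum manipulation
  unfold LoopedDigraph.Cval
  refine Finset.sum_congr rfl fun cs hcs => ?_
  have hcs' : ∀ v, cs v ⊆ G.thickedAt K v ∧
      (v ∈ KW1 G K → (cs v).card = 1) ∧ (v ∉ KW1 G K → cs v = ∅) := by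
    have h := hcs
    unfold LoopedDigraph.kchoices at h
    exact (mem_filter.mp h).2
  have hcsv₀ : cs v₀ = ∅ := (hcs' v₀).2.2 hv₀W
  have hcssub : ∀ v, cs v ⊆ G.thickedAt K v := fun v => (hcs' v).1
  rw [card_insert_of_notMem hv₀X, pow_succ]
  have hred : ∀ (a b : R), a = -b →
      (-1:R)^(KW1 G K).card * ((-1:R)^X.card * -1) * a
        = (-1:R)^(KW1 G K).card * (-1:R)^X.card * b := by
    intro a b h; rw [h]; ring
  apply hred
  rw [← Finset.sum_neg_distrib]
  refine Fintype.sum_bijective (flipAt v₀) (flipAt_involutive v₀).bijective _ _ fun c => ?_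
  -- set identities
  have hv₀U : v₀ ∉ KW1 G K ∪ X := by
    rw [mem_union]; rintro (h | h); exacts [hv₀W h, hv₀X h]
  have hU : KW1 G K ∪ insert v₀ X = insert v₀ (KW1 G K ∪ X) := union_insert v₀ _ X
  have hVX : V' \ X = insert v₀ (V' \ insert v₀ X) := by
    ext w
    by_cases hw : w = v₀
    · subst hw; simp [hv₀V', hv₀X]
    · simp [mem_sdiff, mem_insert, hw]
  have hv₀VX : v₀ ∉ V' \ insert v₀ X := by simp
  have hdisjW1X : Disjoint (KW1 G K) X := by
    rw [disjoint_left]; intro a ha haX; exact (hXsub a haX).2 ha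
  have hvneU : ∀ v ∈ KW1 G K ∪ X, v ≠ v₀ := by
    intro v hv h; subst h; exact hv₀U hv
  have hvneVX : ∀ v ∈ V' \ insert v₀ X, v ≠ v₀ := by
    intro v hv h; subst h; exact hv₀VX hv
  -- the two flip-product identities
  have hA : (∏ v ∈ KW1 G K ∪ X,
        ∏ t ∈ (if v ∈ KW1 G K then cs v else G.thickedAt K v),
          G.zfun x (flipAt v₀ c) true v t.1)
      = (∏ v ∈ KW1 G K ∪ X,
          ∏ t ∈ (if v ∈ KW1 G K then cs v else G.thickedAt K v), sgn v₀ v t.1)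
        * ∏ v ∈ KW1 G K ∪ X,
            ∏ t ∈ (if v ∈ KW1 G K then cs v else G.thickedAt K v), G.zfun x c true v t.1 := by
    rw [← Finset.prod_mul_distrib]
    refine Finset.prod_congr rfl fun v hv => ?_
    rw [← Finset.prod_mul_distrib]
    exact Finset.prod_congr rfl fun t ht => zfun_flipAt_ne' G x c true (hvneU v hv) t.1
  have hB : (∏ v ∈ V' \ insert v₀ X,
        ∏ t ∈ G.thickedAt K v \ cs v, G.zfun x (flipAt v₀ c) false v t.1)
      = (∏ v ∈ V' \ insert v₀ X, ∏ t ∈ G.thickedAt K v \ cs v, sgn v₀ v t.1)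
        * ∏ v ∈ V' \ insert v₀ X, ∏ t ∈ G.thickedAt K v \ cs v, G.zfun x c false v t.1 := by
    rw [← Finset.prod_mul_distrib]
    refine Finset.prod_congr rfl fun v hv => ?_
    rw [← Finset.prod_mul_distrib]
    exact Finset.prod_congr rfl fun t ht => zfun_flipAt_ne' G x c false (hvneVX v hv) t.1
  -- the total sign
  have hEfull : (∏ v ∈ KW1 G K ∪ X,
        ∏ t ∈ (if v ∈ KW1 G K then cs v else G.thickedAt K v), sgn v₀ v t.1)
      * (∏ v ∈ V' \ insert v₀ X, ∏ t ∈ G.thickedAt K v \ cs v, (sgn v₀ v t.1 : R))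
      = (if t₀.1.1 = t₀.1.2 then (1:R) else -1) := by
    have hsplit : V' \ insert v₀ X = KW1 G K ∪ ((V' \ insert v₀ X) \ KW1 G K) := by
      ext w
      simp only [mem_union, mem_sdiff, mem_insert]
      constructor
      · intro hw
        by_cases h : w ∈ KW1 G K
        · exact Or.inl h
        · exact Or.inr ⟨hw, h⟩
      · rintro (hw | hw)
        · refine ⟨hW1V' w hw, ?_⟩
          rintro (rfl | hX')
          · exact hv₀W hw
          · exact (hXsub _ hX').2 hw
        · exact hw.1
    have e1 : (∏ v ∈ KW1 G K ∪ X,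
          ∏ t ∈ (if v ∈ KW1 G K then cs v else G.thickedAt K v), (sgn v₀ v t.1 : R))
        = (∏ v ∈ KW1 G K, ∏ t ∈ cs v, (sgn v₀ v t.1 : R))
          * ∏ v ∈ X, ∏ t ∈ G.thickedAt K v, (sgn v₀ v t.1 : R) := by
      rw [prod_union hdisjW1X]
      congr 1
      · exact Finset.prod_congr rfl fun v hv => by rw [if_pos hv]
      · exact Finset.prod_congr rfl fun v hv => by rw [if_neg ((hXsub v hv).2)]
    have e2 : (∏ v ∈ V' \ insert v₀ X, ∏ t ∈ G.thickedAt K v \ cs v, (sgn v₀ v t.1 : R))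
        = (∏ v ∈ KW1 G K, ∏ t ∈ G.thickedAt K v \ cs v, (sgn v₀ v t.1 : R))
          * ∏ v ∈ (V' \ insert v₀ X) \ KW1 G K, ∏ t ∈ G.thickedAt K v, (sgn v₀ v t.1 : R) := by
      conv_lhs => rw [hsplit]
      rw [prod_union disjoint_sdiff]
      congr 1
      refine Finset.prod_congr rfl fun v hv => ?_
      rw [(hcs' v).2.2 (mem_sdiff.mp hv).2, sdiff_empty]
    rw [e1, e2, mul_mul_mul_comm, ← Finset.prod_mul_distrib]
    have e3 : (∏ v ∈ KW1 G K,
          ((∏ t ∈ cs v, (sgn v₀ v t.1 : R)) * ∏ t ∈ G.thickedAt K v \ cs v, (sgn v₀ v t.1 : R)))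
        = ∏ v ∈ KW1 G K, ∏ t ∈ G.thickedAt K v, (sgn v₀ v t.1 : R) := by
      refine Finset.prod_congr rfl fun v hv => ?_
      rw [mul_comm]
      exact Finset.prod_sdiff (hcssub v)
    rw [e3]
    have hdisjXW : Disjoint X ((V' \ insert v₀ X) \ KW1 G K) := by
      rw [disjoint_left]
      intro a ha ha'
      exact ((mem_sdiff.mp (mem_sdiff.mp ha').1).2) (mem_insert_of_mem ha)
    have hdisjKXW : Disjoint (KW1 G K) (X ∪ ((V' \ insert v₀ X) \ KW1 G K)) := by
      rw [disjoint_left]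
      intro a ha ha'
      rcases mem_union.mp ha' with h | h
      · exact (hXsub a h).2 ha
      · exact (mem_sdiff.mp h).2 ha
    have herase : KW1 G K ∪ (X ∪ ((V' \ insert v₀ X) \ KW1 G K)) = V'.erase v₀ := by
      ext w
      simp only [mem_union, mem_sdiff, mem_insert, mem_erase]
      constructor
      · rintro (hw | hw | hw)
        · exact ⟨fun h => hv₀W (h ▸ hw), hW1V' w hw⟩
        · exact ⟨fun h => hv₀X (h ▸ hw), (hXsub w hw).1⟩
        · exact ⟨fun h => hw.1.2 (Or.inl h), hw.1.1⟩
      · rintro ⟨hne, hV⟩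
        by_cases h1 : w ∈ KW1 G K
        · exact Or.inl h1
        · by_cases h2 : w ∈ X
          · exact Or.inr (Or.inl h2)
          · exact Or.inr (Or.inr ⟨⟨hV, fun h => h.elim hne h2⟩, h1⟩)
    rw [← Finset.prod_union hdisjXW, ← Finset.prod_union hdisjKXW, herase]
    -- fiberwise regrouping
    have hmap : ∀ t ∈ K.filter (fun t => G.tvert t ≠ v₀), G.tvert t ∈ V'.erase v₀ := by
      intro t ht
      rw [mem_filter] at ht
      exact mem_erase.mpr ⟨ht.2, htvV' t ht.1⟩
    have hfib : (∏ v ∈ V'.erase v₀, ∏ t ∈ G.thickedAt K v, (sgn v₀ v t.1 : R))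
        = ∏ t ∈ K.filter (fun t => G.tvert t ≠ v₀), (sgn v₀ (G.tvert t) t.1 : R) := by
      rw [← Finset.prod_fiberwise_of_maps_to hmap (fun t => (sgn v₀ (G.tvert t) t.1 : R))]
      refine Finset.prod_congr rfl fun v hv => ?_
      have hveq : (K.filter (fun t => G.tvert t ≠ v₀)).filter (fun t => G.tvert t = v)
          = G.thickedAt K v := by
        rw [filter_filter]
        unfold LoopedDigraph.thickedAt
        refine filter_congr fun t ht => ?_
        constructor
        · rintro ⟨-, h⟩; exact h
        · intro h; exact ⟨fun hh => (mem_erase.mp hv).1 ((h.symm.trans hh)), h⟩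
      rw [hveq]
      refine Finset.prod_congr rfl fun t ht => ?_
      rw [(mem_thickedAt.mp ht).2]
    rw [hfib]
    have hpow : (∏ t ∈ K.filter (fun t => G.tvert t ≠ v₀), (sgn v₀ (G.tvert t) t.1 : R))
        = (-1 : R) ^ (K.filter (fun t => G.tvert t ≠ v₀ ∧
            (if t.1.1 = G.tvert t then t.1.2 else t.1.1) = v₀)).card := by
      unfold sgn
      rw [Finset.prod_ite (fun _ => (-1 : R)) (fun _ => (1 : R)), Finset.prod_const,
        Finset.prod_const_one, mul_one, filter_filter]
    rw [hpow, hcard]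
    by_cases hloop : t₀.1.1 = t₀.1.2 <;> simp [hloop]
  -- the `v₀` factor
  have hz : G.zfun x (flipAt v₀ c) false v₀ t₀.1
      = (if t₀.1.1 = t₀.1.2 then (-1:R) else 1) * G.zfun x c true v₀ t₀.1 := by
    by_cases hloop : t₀.1.1 = t₀.1.2
    · have h11 : t₀.1.1 = v₀ := by
        rcases tvert_or G t₀ with h | h
        · exact h.symm.trans ht₀v
        · exact hloop.trans (h.symm.trans ht₀v)
      have ht1 : t₀.1 = (v₀, v₀) := Prod.ext_iff.mpr ⟨h11, hloop ▸ h11⟩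
      rw [if_pos hloop, neg_one_mul, ht1]
      exact zfun_flipAt_self_loop G x c v₀ (G.red_no_loop v₀)
    · rw [if_neg hloop, one_mul]
      exact zfun_flipAt_self_nonloop G x c hloop
  -- assemble
  have hsupp_iff : (∀ v, ((flipAt v₀ c) v).isSome = true ↔ v ∈ V')
      ↔ (∀ v, (c v).isSome = true ↔ v ∈ V') :=
    forall_congr' fun v => by rw [flipAt_isSome]
  by_cases hsupp : ∀ v, (c v).isSome = true ↔ v ∈ V'
  · rw [if_pos hsupp, if_pos (hsupp_iff.mpr hsupp)]
    rw [hU, Finset.prod_insert hv₀U, if_neg hv₀W, hVX, Finset.prod_insert hv₀VX,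
      hcsv₀, sdiff_empty, ht₀]
    simp only [Finset.prod_singleton]
    rw [hA, hB, hz]
    exact assemble _ _ _ _ _ _ _ hEfull (by by_cases hloop : t₀.1.1 = t₀.1.2 <;> simp [hloop])
  · rw [if_neg hsupp, if_neg (fun h => hsupp (hsupp_iff.mp h)), neg_zero]

end AuxCval

/-- **Lemma.** For `K` good on `V′` with degree-4 vertex set `W₁`,
`C(X,V′,K) = C(Y,V′,K)` for all `X, Y ⊆ V′∖W₁`. -/
theorem Cval_independent_of_X {V : Type*} [Fintype V] [DecidableEq V]
    (G : LoopedDigraph V) (V' : Finset V) (K : Finset (TArc V))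
    (hK : G.IsGood V' K) (X Y : Finset V)
    (hX : X ⊆ V' \ LoopedDigraph.KW1 G K) (hY : Y ⊆ V' \ LoopedDigraph.KW1 G K) :
    G.Cval V' K X (R := MvPolynomial (V × V) (Polynomial ℚ)) (fun e => MvPolynomial.X e)
    = G.Cval V' K Y (fun e => MvPolynomial.X e) := by
  classical
  have main : ∀ Z : Finset V, Z ⊆ V' \ LoopedDigraph.KW1 G K →
      G.Cval V' K Z (R := MvPolynomial (V × V) (Polynomial ℚ)) (fun e => MvPolynomial.X e)
        = G.Cval V' K ∅ (fun e => MvPolynomial.X e) := by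
    intro Z
    induction Z using Finset.induction_on with
    | empty => intro _; rfl
    | @insert a s ha ih =>
      intro hsub
      have h1 : s ⊆ V' \ LoopedDigraph.KW1 G K := (Finset.subset_insert a s).trans hsub
      rw [Cval_insert G V' K hK (fun e => MvPolynomial.X e) s a ha hsub]
      exact ih h1
  rw [main X hX, main Y hY]
end
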